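/- arXiv:1503.02798 — 6 statements merged into one kernel-verified Lean document; each statement's English description precedes it below -/
import Mathlib

section
/- Let p be an odd prime and m a positive integer coprime to p. Then S(p; p) := ∑_{a=1, (a,p)=1}^{p-1} (1/a²) ∑_{i=1, (i,p)=1}^{am-1} 1/i ≡ m²·B_{p-3} (mod p), as a congruence of rational numbers whose denominators are coprime to p. -/
open Finset

/-- `x ≡ y (mod N)` for rationals: the denominator of `x - y` is coprime to `N`
and `N` divides the numerator of `x - y`. -/
def ratCong (N : ℕ) (x y : ℚ) : Prop :=
  Nat.Coprime (x - y).den N ∧ (N : ℤ) ∣ (x - y).num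

/-- `S p m n = ∑_{a=1, gcd(a,p)=1}^{n-1} (1/a²) ∑_{i=1, gcd(i,p)=1}^{am-1} 1/i`. -/
def S (p m n : ℕ) : ℚ :=
  ∑ a ∈ Finset.Ico 1 n,
    if Nat.Coprime a p then
      (1 / (a : ℚ) ^ 2) * ∑ i ∈ Finset.Ico 1 (a * m), (if Nat.Coprime i p then 1 / (i : ℚ) else 0)
    else 0

/-!
Every term of `S(p; p)` is `p`-integral, so the congruence can be checked in `ZMod p`. There the
inner sum becomes `H(am) = ∑_{i<am} i⁻¹`, which only depends on `am mod p` because the inverses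
over a full period sum to `0`. Substituting `x = am` in the outer sum pulls out `m²` and leaves
`∑_b b⁻² H(b)`. Writing `x⁻¹ = x^(p-2)` and expanding `H(b)` by Faulhaber's formula turns this
into a combination of power sums `∑_b b^e`, which vanish unless `p - 1 ∣ e`; the only surviving
exponent belongs to `B_{p-3}`.
-/

namespace FiniteField

variable {K : Type*} [Field K] [Fintype K]

theorem inv_eq_pow_card_sub_two (hK : 2 < Fintype.card K) (x : K) :
    x⁻¹ = x ^ (Fintype.card K - 2) := by
  rcases eq_or_ne x 0 with rfl | hx
  · rw [inv_zero, zero_pow (by omega)]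
  · refine (eq_inv_of_mul_eq_one_left ?_).symm
    rw [← pow_succ, show Fintype.card K - 2 + 1 = Fintype.card K - 1 by omega,
      pow_card_sub_one_eq_one x hx]

theorem sum_pow_of_ne_zero {i : ℕ} (hi : i ≠ 0) :
    ∑ x : K, x ^ i = if Fintype.card K - 1 ∣ i then -1 else 0 := by
  classical
  have hunits : univ.map ⟨((↑) : Kˣ → K), Units.val_injective⟩ = univ.erase 0 := by
    ext x
    simp only [mem_map, mem_univ, true_and, mem_erase, and_true]
    exact isUnit_iff_ne_zero
  rw [← sum_pow_units K i, ← sum_erase univ (zero_pow hi), ← hunits, sum_map]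
  rfl

end FiniteField

theorem ZMod.sum_univ_eq_sum_range {M : Type*} [AddCommMonoid M] {n : ℕ} [NeZero n]
    (f : ZMod n → M) : ∑ x, f x = ∑ a ∈ range n, f a := by
  obtain ⟨k, rfl⟩ := Nat.exists_eq_succ_of_ne_zero (NeZero.ne n)
  rw [← Fin.sum_univ_eq_sum_range (fun a => f a)]
  exact Fintype.sum_congr _ _ fun x => congrArg f (ZMod.natCast_zmod_val x).symm

theorem Finset.sum_range_mod_of_periodic {M : Type*} [AddCommMonoid M] {f : ℕ → M} {c : ℕ}
    (hf : Function.Periodic f c) (hsum : ∑ i ∈ range c, f i = 0) (n : ℕ) :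
    ∑ i ∈ range n, f i = ∑ i ∈ range (n % c), f i := by
  have hshift (q i : ℕ) : f (c * q + i) = f i := by
    rw [add_comm, mul_comm]; exact hf.nat_mul q i
  have hmul (q : ℕ) : ∑ i ∈ range (c * q), f i = 0 := by
    induction q with
    | zero => simp
    | succ q ih => rw [mul_add_one, sum_range_add, ih, zero_add]; simpa only [hshift] using hsum
  conv_lhs => rw [← Nat.div_add_mod n c, sum_range_add, hmul, zero_add]
  simp only [hshift]

theorem ZMod.natCast_ne_zero_iff_coprime {p : ℕ} [Fact p.Prime] (n : ℕ) :
    (n : ZMod p) ≠ 0 ↔ n.Coprime p :=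
  isUnit_iff_ne_zero.symm.trans (ZMod.isUnit_iff_coprime n p)

abbrev Rat.pIntegers (p : ℕ) [Fact p.Prime] : Subring ℚ := (Rat.padicValuation p).integer

namespace Rat

variable {p : ℕ} [Fact p.Prime] {x y : ℚ}

theorem mem_pIntegers : x ∈ pIntegers p ↔ x.den.Coprime p := by
  rw [← ZMod.natCast_ne_zero_iff_coprime, Ne, ZMod.natCast_eq_zero_iff]
  exact padicValuation_le_one_iff

theorem inv_natCast_mem_pIntegers {n : ℕ} (h : n.Coprime p) : (n : ℚ)⁻¹ ∈ pIntegers p := by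
  rw [mem_pIntegers, inv_natCast_den]
  split_ifs
  exacts [Nat.coprime_one_left p, h]

theorem bernoulli_mem_pIntegers {j : ℕ} (hj : j + 1 < p) : bernoulli j ∈ pIntegers p := by
  induction j using Nat.strong_induction_on with
  | _ j ih =>
  rcases j.eq_zero_or_pos with rfl | hj0
  · simp
  have hrec : bernoulli j =
      -((j + 1 : ℕ) : ℚ)⁻¹ * ∑ k ∈ range j, ((j + 1).choose k : ℚ) * bernoulli k := by
    have h := sum_bernoulli (j + 1)
    rw [if_neg (by omega), sum_range_succ, Nat.choose_succ_self_right] at h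
    field_simp
    push_cast at h ⊢
    linarith
  rw [hrec]
  refine mul_mem (neg_mem (inv_natCast_mem_pIntegers
    (Nat.coprime_of_lt_prime (by omega) hj Fact.out).symm))
    (sum_mem fun k hk => mul_mem (natCast_mem _ _) (ih k (mem_range.mp hk) (by
      have := mem_range.mp hk; omega)))

theorem natCast_den_ne_zero_of_mem_pIntegers (hx : x ∈ pIntegers p) : (x.den : ZMod p) ≠ 0 :=
  (ZMod.natCast_ne_zero_iff_coprime _).mpr (mem_pIntegers.mp hx)

theorem cast_add_of_mem_pIntegers (hx : x ∈ pIntegers p) (hy : y ∈ pIntegers p) :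
    ((x + y : ℚ) : ZMod p) = x + y :=
  cast_add_of_ne_zero (natCast_den_ne_zero_of_mem_pIntegers hx)
    (natCast_den_ne_zero_of_mem_pIntegers hy)

theorem cast_sub_of_mem_pIntegers (hx : x ∈ pIntegers p) (hy : y ∈ pIntegers p) :
    ((x - y : ℚ) : ZMod p) = x - y :=
  cast_sub_of_ne_zero (natCast_den_ne_zero_of_mem_pIntegers hx)
    (natCast_den_ne_zero_of_mem_pIntegers hy)

theorem cast_mul_of_mem_pIntegers (hx : x ∈ pIntegers p) (hy : y ∈ pIntegers p) :
    ((x * y : ℚ) : ZMod p) = x * y :=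
  cast_mul_of_ne_zero (natCast_den_ne_zero_of_mem_pIntegers hx)
    (natCast_den_ne_zero_of_mem_pIntegers hy)

theorem cast_sum_of_mem_pIntegers {ι : Type*} {s : Finset ι} {f : ι → ℚ}
    (hf : ∀ i ∈ s, f i ∈ pIntegers p) :
    ((∑ i ∈ s, f i : ℚ) : ZMod p) = ∑ i ∈ s, (f i : ZMod p) := by
  classical
  induction s using Finset.induction_on with
  | empty => simp
  | insert i s hi ih =>
    rw [sum_insert hi, sum_insert hi, cast_add_of_mem_pIntegers (hf i (mem_insert_self i s))
      (sum_mem fun j hj => hf j (mem_insert_of_mem hj)),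
      ih fun j hj => hf j (mem_insert_of_mem hj)]

end Rat

open Rat

section

variable {p : ℕ} [Fact p.Prime]

theorem ratCong_of_cast_eq {x y : ℚ} (hx : x ∈ pIntegers p)
    (hy : y ∈ pIntegers p) (h : (x : ZMod p) = y) : ratCong p x y := by
  have hxy : x - y ∈ pIntegers p := sub_mem hx hy
  have hcast : ((x - y : ℚ) : ZMod p) = 0 := by rw [cast_sub_of_mem_pIntegers hx hy, h, sub_self]
  rw [cast_def, div_eq_zero_iff, or_iff_left (natCast_den_ne_zero_of_mem_pIntegers hxy)] at hcast
  exact ⟨mem_pIntegers.mp hxy, (ZMod.intCast_zmod_eq_zero_iff_dvd _ p).mp hcast⟩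

theorem sum_range_pow_zmod {k : ℕ} (hk : k + 1 < p) (n : ℕ) :
    ∑ i ∈ range n, (i : ZMod p) ^ k =
      ∑ j ∈ range (k + 1),
        (bernoulli j : ZMod p) * ((k + 1).choose j) * (n : ZMod p) ^ (k + 1 - j) / (k + 1) := by
  have hinv : ((k + 1 : ℕ) : ℚ)⁻¹ ∈ pIntegers p := inv_natCast_mem_pIntegers
    (Nat.coprime_of_lt_prime k.succ_ne_zero hk Fact.out).symm
  have hterm : ∀ j ∈ range (k + 1),
      bernoulli j * ((k + 1).choose j) * (n : ℚ) ^ (k + 1 - j) / (k + 1) =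
        bernoulli j * (((k + 1).choose j * n ^ (k + 1 - j) : ℕ) * ((k + 1 : ℕ) : ℚ)⁻¹) := by
    intros; push_cast; ring
  have hmem : ∀ j ∈ range (k + 1),
      bernoulli j * (((k + 1).choose j * n ^ (k + 1 - j) : ℕ) * ((k + 1 : ℕ) : ℚ)⁻¹) ∈
        pIntegers p := fun j hj =>
    mul_mem (bernoulli_mem_pIntegers (by have := mem_range.mp hj; omega))
      (mul_mem (natCast_mem _ _) hinv)
  calc ∑ i ∈ range n, (i : ZMod p) ^ k
      = ((∑ i ∈ range n, i ^ k : ℕ) : ℚ) := by rw [cast_natCast]; push_cast; rfl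
    _ = ((∑ j ∈ range (k + 1),
          bernoulli j * (((k + 1).choose j * n ^ (k + 1 - j) : ℕ) * ((k + 1 : ℕ) : ℚ)⁻¹) : ℚ) :
            ZMod p) := by
      rw [← sum_congr rfl hterm, ← sum_range_pow]; push_cast; rfl
    _ = _ := by
      rw [cast_sum_of_mem_pIntegers hmem]
      refine sum_congr rfl fun j hj => ?_
      rw [cast_mul_of_mem_pIntegers (bernoulli_mem_pIntegers (by have := mem_range.mp hj; omega))
        (mul_mem (natCast_mem _ _) hinv), cast_mul_of_mem_pIntegers (natCast_mem _ _) hinv,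
        cast_natCast, cast_inv_nat]
      push_cast
      ring

end

theorem add_two_dvd_iff {n j : ℕ} (hj : j < n + 2) :
    n + 2 ∣ 2 * (n + 1) + (n + 2 - j) ↔ j = n := by
  refine ⟨fun hdvd => ?_, fun hjn => ⟨2, by omega⟩⟩
  by_contra hjn
  rcases Nat.lt_or_gt_of_ne hjn with hlt | hgt
  · exact Nat.not_dvd_of_lt_of_lt_mul_succ (k := 2) (by omega) (by omega) hdvd
  · exact Nat.not_dvd_of_lt_of_lt_mul_succ (k := 1) (by omega) (by omega) hdvd

theorem natCast_choose_add_two_eq_one (n : ℕ) [Fact (n + 3).Prime] :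
    ((n + 2).choose n : ZMod (n + 3)) = 1 := by
  have h3 : (n : ZMod (n + 3)) + 3 = 0 := by exact_mod_cast ZMod.natCast_self (n + 3)
  have hchoose : (n + 2).choose n * 2 = (n + 1) * (n + 2) := by
    have := Nat.choose_mul_succ_eq (n + 1) n
    rw [Nat.choose_succ_self_right, show n + 1 + 1 - n = 2 by omega] at this
    linarith
  have h2 : (2 : ZMod (n + 3)) ≠ 0 := by
    exact_mod_cast (ZMod.natCast_eq_zero_iff 2 (n + 3)).not.mpr
      (Nat.not_dvd_of_pos_of_lt two_pos (by omega))
  refine mul_right_cancel₀ h2 ?_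
  have := congrArg (Nat.cast : ℕ → ZMod (n + 3)) hchoose
  push_cast at this
  linear_combination this + n * h3

/-- Since `0⁻¹ = 0` in `ZMod p`, multiples of `p` drop out of this sum, as they do in `S`. -/
def harmonicMod (p n : ℕ) : ZMod p := ∑ i ∈ range n, (i : ZMod p)⁻¹

section

variable {p : ℕ} [Fact p.Prime]

theorem harmonicMod_val_natCast (hp2 : p ≠ 2) (n : ℕ) :
    harmonicMod p (n : ZMod p).val = harmonicMod p n := by
  have hp : 2 < p := lt_of_le_of_ne (Fact.out : p.Prime).two_le (Ne.symm hp2)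
  have hperiod : Function.Periodic (fun i : ℕ => (i : ZMod p)⁻¹) p := fun i => by simp
  have hfull : ∑ i ∈ range p, (i : ZMod p)⁻¹ = 0 := by
    rw [← ZMod.sum_univ_eq_sum_range (·⁻¹)]
    simp only [FiniteField.inv_eq_pow_card_sub_two (K := ZMod p) (by rwa [ZMod.card])]
    exact FiniteField.sum_pow_lt_card_sub_one _ _ (by rw [ZMod.card]; omega)
  rw [ZMod.val_natCast, harmonicMod, harmonicMod]
  exact (sum_range_mod_of_periodic hperiod hfull n).symm

theorem sum_range_inv_sq_mul_harmonicMod (hp2 : p ≠ 2) :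
    ∑ b ∈ range p, ((b : ZMod p) ^ 2)⁻¹ * harmonicMod p b = bernoulli (p - 3) := by
  obtain ⟨n, rfl⟩ : ∃ n, p = n + 3 := ⟨p - 3, by have := (Fact.out : p.Prime).two_le; omega⟩
  have hinv (x : ZMod (n + 3)) : x⁻¹ = x ^ (n + 1) := by
    rw [FiniteField.inv_eq_pow_card_sub_two (by rw [ZMod.card]; omega), ZMod.card]; rfl
  have hpow {e : ℕ} (he : e ≠ 0) :
      ∑ b ∈ range (n + 3), (b : ZMod (n + 3)) ^ e = if n + 2 ∣ e then -1 else 0 := by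
    rw [← ZMod.sum_univ_eq_sum_range (· ^ e), FiniteField.sum_pow_of_ne_zero he, ZMod.card]; rfl
  set c : ℕ → ZMod (n + 3) := fun j => (bernoulli j : ZMod (n + 3)) * ((n + 2).choose j) / (n + 2)
  have hexpand (b : ℕ) : ((b : ZMod (n + 3)) ^ 2)⁻¹ * harmonicMod (n + 3) b =
      ∑ j ∈ range (n + 2), c j * (b : ZMod (n + 3)) ^ (2 * (n + 1) + (n + 2 - j)) := by
    rw [harmonicMod, hinv, ← pow_mul]
    simp only [hinv]
    rw [sum_range_pow_zmod (by omega), mul_sum]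
    refine sum_congr rfl fun j _ => ?_
    rw [pow_add]; push_cast; ring
  have hn2 : (n : ZMod (n + 3)) + 2 = -1 := by
    have h3 : (n : ZMod (n + 3)) + 3 = 0 := by exact_mod_cast ZMod.natCast_self (n + 3)
    linear_combination h3
  calc ∑ b ∈ range (n + 3), ((b : ZMod (n + 3)) ^ 2)⁻¹ * harmonicMod (n + 3) b
      = ∑ j ∈ range (n + 2), c j * ∑ b ∈ range (n + 3), (b : ZMod (n + 3)) ^
          (2 * (n + 1) + (n + 2 - j)) := by
        simp only [hexpand, mul_sum]; exact sum_comm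
    _ = ∑ j ∈ range (n + 2), if j = n then c j * -1 else 0 := by
        refine sum_congr rfl fun j hj => ?_
        simp only [hpow (by omega : 2 * (n + 1) + (n + 2 - j) ≠ 0),
          add_two_dvd_iff (mem_range.mp hj), mul_ite, mul_zero]
    _ = bernoulli n := by
        rw [sum_ite_eq', if_pos (by simp)]
        simp only [c, natCast_choose_add_two_eq_one, hn2]
        ring

theorem sum_range_inv_sq_mul_harmonicMod_mul (hp2 : p ≠ 2) {m : ℕ} (hm : (m : ZMod p) ≠ 0) :
    ∑ a ∈ range p, ((a : ZMod p) ^ 2)⁻¹ * harmonicMod p (a * m) =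
      (m : ZMod p) ^ 2 * ∑ b ∈ range p, ((b : ZMod p) ^ 2)⁻¹ * harmonicMod p b := by
  set F : ZMod p → ZMod p := fun x => (x ^ 2)⁻¹ * harmonicMod p x.val
  have hF (n : ℕ) : F n = ((n : ZMod p) ^ 2)⁻¹ * harmonicMod p n := by
    simp only [F, harmonicMod_val_natCast hp2]
  calc ∑ a ∈ range p, ((a : ZMod p) ^ 2)⁻¹ * harmonicMod p (a * m)
      = ∑ a ∈ range p, (m : ZMod p) ^ 2 * F (a * m) := sum_congr rfl fun a _ => by
        rw [← Nat.cast_mul, hF, Nat.cast_mul, mul_pow, mul_inv,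
          mul_comm ((a : ZMod p) ^ 2)⁻¹ ((m : ZMod p) ^ 2)⁻¹, mul_assoc,
          mul_inv_cancel_left₀ (pow_ne_zero 2 hm)]
    _ = (m : ZMod p) ^ 2 * ∑ x, F x := by
      rw [← mul_sum, ← ZMod.sum_univ_eq_sum_range (fun x : ZMod p => F (x * m))]
      exact congrArg _ (Equiv.sum_comp (Equiv.mulRight₀ _ hm) F)
    _ = _ := by rw [ZMod.sum_univ_eq_sum_range, sum_congr rfl fun b _ => hF b]

theorem cast_sum_Ico_ite_coprime {f : ℕ → ℚ} {g : ℕ → ZMod p} (N : ℕ)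
    (hf : ∀ n, n.Coprime p → f n ∈ pIntegers p ∧ (f n : ZMod p) = g n)
    (hg : ∀ n : ℕ, (n : ZMod p) = 0 → g n = 0) :
    (∑ n ∈ Ico 1 N, if n.Coprime p then f n else 0) ∈ pIntegers p ∧
      ((∑ n ∈ Ico 1 N, if n.Coprime p then f n else 0 : ℚ) : ZMod p) = ∑ n ∈ range N, g n := by
  have hterm (n : ℕ) : (if n.Coprime p then f n else 0) ∈ pIntegers p ∧
      ((if n.Coprime p then f n else 0 : ℚ) : ZMod p) = g n := by
    split_ifs with h
    · exact hf n h
    · rw [← ZMod.natCast_ne_zero_iff_coprime, not_not] at h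
      exact ⟨zero_mem _, by rw [cast_zero, hg n h]⟩
  refine ⟨sum_mem fun n _ => (hterm n).1, ?_⟩
  rw [cast_sum_of_mem_pIntegers fun n _ => (hterm n).1, sum_congr rfl fun n _ => (hterm n).2]
  refine sum_subset (fun n hn => mem_range.mpr (mem_Ico.mp hn).2) fun n hn hn' => hg n ?_
  obtain rfl : n = 0 := by simp only [mem_range, mem_Ico, not_and, not_lt] at hn hn'; omega
  exact Nat.cast_zero

theorem cast_S (m N : ℕ) :
    S p m N ∈ pIntegers p ∧
      (S p m N : ZMod p) = ∑ a ∈ range N, ((a : ZMod p) ^ 2)⁻¹ * harmonicMod p (a * m) := by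
  have hinv {n k : ℕ} (h : n.Coprime p) : 1 / (n : ℚ) ^ k ∈ pIntegers p ∧
      ((1 / (n : ℚ) ^ k : ℚ) : ZMod p) = ((n : ZMod p) ^ k)⁻¹ := by
    rw [one_div, ← Nat.cast_pow]
    exact ⟨inv_natCast_mem_pIntegers (h.pow_left k), by rw [cast_inv_nat, Nat.cast_pow]⟩
  have hinner (a : ℕ) := cast_sum_Ico_ite_coprime (f := fun i => 1 / (i : ℚ))
    (g := fun i => (i : ZMod p)⁻¹) (a * m) (fun i hi => by simpa using hinv (k := 1) hi)
    (fun i hi => by rw [hi, inv_zero])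
  refine cast_sum_Ico_ite_coprime N (fun a ha => ⟨mul_mem (hinv ha).1 (hinner a).1, ?_⟩)
    (fun a ha => by rw [ha, zero_pow two_ne_zero, inv_zero, zero_mul])
  rw [cast_mul_of_mem_pIntegers (hinv ha).1 (hinner a).1, (hinv ha).2, (hinner a).2, harmonicMod]

end

theorem S_p_congr_general (p m : ℕ) (hp : p.Prime) (hp2 : p ≠ 2)
    (hmp : Nat.Coprime m p) :
    ratCong p (S p m p) ((m : ℚ) ^ 2 * bernoulli (p - 3)) := by
  have := Fact.mk hp
  have hm2 : (m : ℚ) ^ 2 ∈ pIntegers p := pow_mem (natCast_mem _ m) 2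
  have hB : bernoulli (p - 3) ∈ pIntegers p :=
    bernoulli_mem_pIntegers (by have := hp.two_le; omega)
  have hm : (m : ZMod p) ≠ 0 := (ZMod.natCast_ne_zero_iff_coprime m).mpr hmp
  obtain ⟨hS, hcast⟩ := cast_S (p := p) m p
  refine ratCong_of_cast_eq hS (mul_mem hm2 hB) ?_
  rw [hcast, sum_range_inv_sq_mul_harmonicMod_mul hp2 hm, sum_range_inv_sq_mul_harmonicMod hp2,
    cast_mul_of_mem_pIntegers hm2 hB, cast_pow, cast_natCast]

theorem S_p_congr (p m : ℕ) (hp : p.Prime) (hp2 : p ≠ 2) (hm : 1 ≤ m)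
    (hmp : Nat.Coprime m p) :
    ratCong p (S p m p) ((m : ℚ) ^ 2 * bernoulli (p - 3)) :=
  S_p_congr_general p m hp hp2 hmp
end

section
/- Let p be an odd prime and m a positive integer coprime to p. Then T(p; p) := ∑_{a=1, (a,p)=1}^{p-1} (1/a²) ∑_{1 ≤ i ≤ am-1, i ≡ am (mod p)} 1/i ≡ ((m³ - m)/(3m))·B_{p-3} (mod p), as a congruence of rational numbers whose denominators are coprime to p. -/
/-
Modulo `p` every `1 / i` in the inner sum equals `1 / (a m)`, and there are `⌊a m / p⌋` such `i`,
so `T ≡ m⁻¹ ∑_{a < p} ⌊a m / p⌋ / a³`. Writing `a m mod p = a m - p ⌊a m / p⌋`, expanding its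
`k`-th power to first order in `p` and using that `a ↦ a m mod p` permutes the residues gives
`p k m^(k-1) ∑ a^(k-1) ⌊a m / p⌋ ≡ (m^k - 1) ∑ a^k (mod p²)`. For `k = p - 3`, Faulhaber's formula
gives `∑_{a < p} a^k ≡ p B_k (mod p²)`, and Fermat turns `a^(k-1)` into `a⁻³`; dividing by `p`
yields `3 ∑ ⌊a m / p⌋ / a³ ≡ (m³ - m) B_{p-3} (mod p)`. For `p = 3` that Faulhaber congruence
fails (`B_0 = 1`); there the same expansion with `k = 2`, where `∑_{a < 3} a² = 5`, gives the claim.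
-/

open Finset

/-- `T p m n = ∑_{a=1, gcd(a,p)=1}^{n-1} (1/a²) ∑_{1 ≤ i ≤ am-1, i ≡ am (mod p)} 1/i`. -/
def T (p m n : ℕ) : ℚ :=
  ∑ a ∈ Finset.Ico 1 n,
    if Nat.Coprime a p then
      (1 / (a : ℚ) ^ 2) * ∑ i ∈ Finset.Ico 1 (a * m), (if i % p = (a * m) % p then 1 / (i : ℚ) else 0)
    else 0

lemma ZMod.natCast_ne_zero_of_dvd {p d n : ℕ} (hd : d ∣ n) (hn : (n : ZMod p) ≠ 0) :
    (d : ZMod p) ≠ 0 :=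
  fun h => hn (zero_dvd_iff.1 (h ▸ Nat.cast_dvd_cast hd))

/-- The cast `(x : ZMod p)` is only meaningful when `p ∤ x.den`; otherwise it divides by `0`. -/
def ReducesMod (p : ℕ) [Fact p.Prime] (x : ℚ) (u : ZMod p) : Prop :=
  (x.den : ZMod p) ≠ 0 ∧ (x : ZMod p) = u

namespace ReducesMod

variable {p : ℕ} [Fact p.Prime] {x y : ℚ} {u v : ZMod p}

lemma unique (hu : ReducesMod p x u) (hv : ReducesMod p x v) : u = v := hu.2.symm.trans hv.2

lemma natCast (n : ℕ) : ReducesMod p n n := ⟨by simp, Rat.cast_natCast n⟩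

lemma one : ReducesMod p 1 1 := ⟨by simp, Rat.cast_one⟩

lemma intCast (n : ℤ) : ReducesMod p n n := ⟨by simp, Rat.cast_intCast n⟩

lemma add (hx : ReducesMod p x u) (hy : ReducesMod p y v) : ReducesMod p (x + y) (u + v) :=
  ⟨ZMod.natCast_ne_zero_of_dvd (Rat.add_den_dvd x y) (by push_cast; exact mul_ne_zero hx.1 hy.1),
    by rw [Rat.cast_add_of_ne_zero hx.1 hy.1, hx.2, hy.2]⟩

lemma mul (hx : ReducesMod p x u) (hy : ReducesMod p y v) : ReducesMod p (x * y) (u * v) :=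
  ⟨ZMod.natCast_ne_zero_of_dvd (Rat.mul_den_dvd x y) (by push_cast; exact mul_ne_zero hx.1 hy.1),
    by rw [Rat.cast_mul_of_ne_zero hx.1 hy.1, hx.2, hy.2]⟩

lemma neg (hx : ReducesMod p x u) : ReducesMod p (-x) (-u) :=
  ⟨by simpa using hx.1, by rw [Rat.cast_neg, hx.2]⟩

lemma sub (hx : ReducesMod p x u) (hy : ReducesMod p y v) : ReducesMod p (x - y) (u - v) := by
  simpa only [sub_eq_add_neg] using hx.add hy.neg

lemma pow (hx : ReducesMod p x u) (n : ℕ) : ReducesMod p (x ^ n) (u ^ n) := by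
  induction n with
  | zero => simpa using one (p := p)
  | succ n ih => simpa only [pow_succ] using ih.mul hx

lemma inv (hx : ReducesMod p x u) (hu : u ≠ 0) : ReducesMod p x⁻¹ u⁻¹ := by
  obtain ⟨hden, rfl⟩ := hx
  have hnum : (x.num : ZMod p) ≠ 0 := by
    rw [Rat.cast_def] at hu
    exact left_ne_zero_of_mul (div_eq_mul_inv (x.num : ZMod p) _ ▸ hu)
  refine ⟨?_, Rat.cast_inv_of_ne_zero hnum⟩
  rw [Rat.den_inv_of_ne_zero (by rintro rfl; simp at hnum)]
  rw [Ne, ZMod.natCast_eq_zero_iff, ← Int.natCast_dvd, ← ZMod.intCast_zmod_eq_zero_iff_dvd]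
  exact hnum

lemma div (hx : ReducesMod p x u) (hy : ReducesMod p y v) (hv : v ≠ 0) :
    ReducesMod p (x / y) (u / v) := by
  simpa only [div_eq_mul_inv] using hx.mul (hy.inv hv)

lemma natCast_self_mul (hx : ReducesMod p x u) : ReducesMod p (p * x) 0 := by
  simpa using (natCast p).mul hx

lemma sum {ι : Type*} {s : Finset ι} {f : ι → ℚ} {g : ι → ZMod p}
    (h : ∀ i ∈ s, ReducesMod p (f i) (g i)) : ReducesMod p (∑ i ∈ s, f i) (∑ i ∈ s, g i) := by
  classical
  induction s using Finset.induction_on with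
  | empty => simpa using natCast (p := p) 0
  | insert a s ha ih =>
    rw [sum_insert ha, sum_insert ha]
    exact (h a (mem_insert_self a s)).add (ih fun i hi => h i (mem_insert_of_mem hi))

end ReducesMod

lemma ratCong_of_reducesMod {p : ℕ} [hp : Fact p.Prime] {x y : ℚ} {u : ZMod p}
    (hx : ReducesMod p x u) (hy : ReducesMod p y u) : ratCong p x y := by
  obtain ⟨hden, hzero⟩ := hx.sub hy
  rw [sub_self, Rat.cast_def, div_eq_zero_iff, or_iff_left hden,
    ZMod.intCast_zmod_eq_zero_iff_dvd] at hzero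
  rw [Ne, ZMod.natCast_eq_zero_iff] at hden
  exact ⟨(Nat.coprime_comm.1 ((Nat.Prime.coprime_iff_not_dvd hp.out).2 hden)), hzero⟩

lemma card_filter_mod_eq_mod {p n : ℕ} (hp : 0 < p) (hn : n % p ≠ 0) :
    #{i ∈ Ico 1 n | i % p = n % p} = n / p := by
  have hfilter : {i ∈ Ico 1 n | i % p = n % p} = {i ∈ range n | i % p = n % p} := by
    ext i
    simp only [mem_filter, mem_Ico, mem_range]
    refine ⟨fun h => ⟨h.1.2, h.2⟩, fun h => ⟨⟨Nat.pos_of_ne_zero ?_, h.1⟩, h.2⟩⟩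
    rintro rfl
    exact hn (by simpa using h.2.symm)
  have hcount := Nat.count_modEq_card n hp n
  rw [Nat.count_eq_card_filter_range, if_neg (lt_irrefl _), add_zero] at hcount
  rw [hfilter, ← hcount]
  rfl

lemma sum_range_eq_sum_zmod {n : ℕ} [NeZero n] {M : Type*} [AddCommMonoid M] (f : ZMod n → M) :
    ∑ a ∈ range n, f a = ∑ x : ZMod n, f x :=
  sum_nbij' Nat.cast ZMod.val (fun _ _ => mem_univ _) (fun x _ => mem_range.2 (ZMod.val_lt x))
    (fun _ ha => ZMod.val_cast_of_lt (mem_range.1 ha)) (fun x _ => ZMod.natCast_zmod_val x)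
    (fun _ _ => rfl)

section

variable {p : ℕ} [Fact p.Prime]

lemma reducesMod_sum_one_div_of_mod_eq {n : ℕ} (hn : (n : ZMod p) ≠ 0) :
    ReducesMod p (∑ i ∈ Ico 1 n, if i % p = n % p then 1 / (i : ℚ) else 0)
      ((n / p : ℕ) / (n : ZMod p)) := by
  have hterm : ∀ i ∈ Ico 1 n, ReducesMod p (if i % p = n % p then 1 / (i : ℚ) else 0)
      (if i % p = n % p then 1 / (n : ZMod p) else 0) := by
    intro i _
    split_ifs with h
    · have hi : (i : ZMod p) = n := by rw [← ZMod.natCast_mod, h, ZMod.natCast_mod]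
      have := ReducesMod.one.div (ReducesMod.natCast (p := p) i) (hi ▸ hn)
      rwa [hi] at this
    · simpa using ReducesMod.natCast (p := p) 0
  have hnp : n % p ≠ 0 := fun h => hn ((ZMod.natCast_eq_zero_iff _ _).2 (Nat.dvd_of_mod_eq_zero h))
  convert ReducesMod.sum hterm using 1
  rw [← sum_filter, sum_const, card_filter_mod_eq_mod (Fact.out : p.Prime).pos hnp, nsmul_eq_mul,
    mul_one_div]

def floorCubeSum (p : ℕ) [Fact p.Prime] (m : ℕ) : ZMod p :=
  ∑ a ∈ range p, ((a * m / p : ℕ) : ZMod p) / (a : ZMod p) ^ 3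

lemma reducesMod_T {m : ℕ} (hm : (m : ZMod p) ≠ 0) :
    ReducesMod p (T p m p) (floorCubeSum p m / m) := by
  have hterm : ∀ a ∈ Ico 1 p, ReducesMod p
      (if a.Coprime p then 1 / (a : ℚ) ^ 2 *
        ∑ i ∈ Ico 1 (a * m), (if i % p = a * m % p then 1 / (i : ℚ) else 0) else 0)
      (((a * m / p : ℕ) : ZMod p) / (a : ZMod p) ^ 3 / m) := by
    intro a ha
    rw [mem_Ico] at ha
    have hpa : ¬ p ∣ a := Nat.not_dvd_of_pos_of_lt ha.1 ha.2
    have ha0 : (a : ZMod p) ≠ 0 := by rwa [Ne, ZMod.natCast_eq_zero_iff]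
    rw [if_pos (Nat.coprime_comm.1 ((Nat.Prime.coprime_iff_not_dvd Fact.out).2 hpa))]
    convert (ReducesMod.one.div ((ReducesMod.natCast a).pow 2) (pow_ne_zero 2 ha0)).mul
      (reducesMod_sum_one_div_of_mod_eq (n := a * m) (by push_cast; exact mul_ne_zero ha0 hm))
      using 1
    push_cast
    field_simp
  rw [T, floorCubeSum, sum_div, range_eq_Ico, sum_eq_sum_Ico_succ_bot (Fact.out : p.Prime).pos]
  simpa using ReducesMod.sum hterm

lemma reducesMod_bernoulli' {n : ℕ} (hn : n + 1 < p) :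
    ReducesMod p (bernoulli' n) (bernoulli' n) := by
  induction n using Nat.strong_induction_on with
  | _ n ih =>
    have hterm : ∀ k ∈ range n, ReducesMod p ((n.choose k : ℚ) / (n - k + 1) * bernoulli' k)
        ((n.choose k : ZMod p) / ((n - k + 1 : ℕ) : ZMod p) * (bernoulli' k : ZMod p)) := by
      intro k hk
      rw [mem_range] at hk
      have hden : ((n - k + 1 : ℕ) : ZMod p) ≠ 0 := by
        rw [Ne, ZMod.natCast_eq_zero_iff]
        exact Nat.not_dvd_of_pos_of_lt (by omega) (by omega)
      have := ((ReducesMod.natCast (n.choose k)).div (ReducesMod.natCast (n - k + 1)) hden).mul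
        (ih k hk (by omega))
      rwa [Nat.cast_add_one, Nat.cast_sub hk.le] at this
    refine ⟨?_, rfl⟩
    rw [bernoulli'_def]
    exact (ReducesMod.one.sub (ReducesMod.sum hterm)).1

lemma reducesMod_bernoulli {n : ℕ} (hn : n + 1 < p) :
    ReducesMod p (bernoulli n) (bernoulli n) := by
  refine ⟨?_, rfl⟩
  rw [bernoulli]
  exact (((ReducesMod.intCast (-1)).pow n).mul (reducesMod_bernoulli' hn)).1

lemma reducesMod_sum_range_pow_div {k : ℕ} (hk : k + 1 < p) :
    ReducesMod p ((∑ a ∈ range p, (a : ℚ) ^ k) / p) (bernoulli k) := by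
  have hp : (p : ℚ) ≠ 0 := Nat.cast_ne_zero.2 (Fact.out : p.Prime).ne_zero
  have hk1 : (k + 1 : ℚ) ≠ 0 := by positivity
  have hk1p : ((k + 1 : ℕ) : ZMod p) ≠ 0 := by
    rw [Ne, ZMod.natCast_eq_zero_iff]
    exact Nat.not_dvd_of_pos_of_lt (by omega) hk
  rw [sum_range_pow, sum_range_succ, add_div, sum_div]
  have hlast : bernoulli k * ((k + 1).choose k : ℚ) * (p : ℚ) ^ (k + 1 - k) / (k + 1) / p
      = bernoulli k := by
    rw [Nat.choose_succ_self_right, Nat.add_sub_cancel_left, pow_one]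
    push_cast
    field_simp
  have hrest : ∀ j ∈ range k, bernoulli j * ((k + 1).choose j : ℚ) * (p : ℚ) ^ (k + 1 - j)
      / (k + 1) / p = p * (bernoulli j * ((k + 1).choose j) * ((p ^ (k - 1 - j) : ℕ) : ℚ)
      / ((k + 1 : ℕ) : ℚ)) := by
    intro j hj
    rw [mem_range] at hj
    rw [show k + 1 - j = k - 1 - j + 2 by omega, pow_add]
    push_cast
    field_simp
  have hrest_reduces : ∀ j ∈ range k, ReducesMod p (p * (bernoulli j * ((k + 1).choose j)
      * ((p ^ (k - 1 - j) : ℕ) : ℚ) / ((k + 1 : ℕ) : ℚ))) 0 := by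
    intro j hj
    rw [mem_range] at hj
    exact ReducesMod.natCast_self_mul ((((reducesMod_bernoulli (by omega)).mul (.natCast _)).mul
      (.natCast _)).div (.natCast (k + 1)) hk1p)
  rw [hlast, sum_congr rfl hrest]
  simpa using (ReducesMod.sum hrest_reduces).add (reducesMod_bernoulli (by omega))

lemma sum_range_comp_mul_mod {M : Type*} [AddCommMonoid M] {m : ℕ} (hm : (m : ZMod p) ≠ 0)
    (f : ℕ → M) : ∑ a ∈ range p, f (a * m % p) = ∑ a ∈ range p, f a :=
  calc ∑ a ∈ range p, f (a * m % p)
      = ∑ a ∈ range p, f ((a : ZMod p) * m).val := by simp_rw [← Nat.cast_mul, ZMod.val_natCast]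
    _ = ∑ x : ZMod p, f x.val :=
      (sum_range_eq_sum_zmod fun x : ZMod p => f (x * m).val).trans
        (Equiv.sum_comp (Equiv.mulRight₀ _ hm) fun x => f x.val)
    _ = ∑ a ∈ range p, f a :=
      (sum_range_eq_sum_zmod fun x : ZMod p => f x.val).symm.trans
        (sum_congr rfl fun _ ha => by rw [ZMod.val_cast_of_lt (mem_range.1 ha)])

lemma sq_dvd_sum_pow_sub {m : ℕ} (hm : (m : ZMod p) ≠ 0) (k : ℕ) :
    (p : ℤ) ^ 2 ∣ (m ^ k - 1) * ∑ a ∈ range p, (a : ℤ) ^ k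
      - p * (k * m ^ (k - 1) * ∑ a ∈ range p, (a : ℤ) ^ (k - 1) * (a * m / p : ℕ)) := by
  have hterm : ∀ a : ℕ, (p : ℤ) ^ 2 ∣ ((a * m % p : ℕ) : ℤ) ^ k
      - ((a * m : ℤ) ^ k - p * (k * (a * m : ℤ) ^ (k - 1) * (a * m / p : ℕ))) := by
    intro a
    have hdiv := congrArg (Nat.cast : ℕ → ℤ) (Nat.mod_add_div (a * m) p)
    simp only [Nat.cast_add, Nat.cast_mul] at hdiv
    have hmod : ((a * m % p : ℕ) : ℤ) = a * m + p * -((a * m / p : ℕ) : ℤ) := by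
      linear_combination hdiv
    rw [hmod]
    refine (pow_dvd_pow_of_dvd (dvd_mul_right (p : ℤ) (-((a * m / p : ℕ) : ℤ))) 2).trans ?_
    convert sq_dvd_add_pow_sub_sub (p * -((a * m / p : ℕ) : ℤ)) (a * m : ℤ) k using 1
    ring
  have hperm : ∑ a ∈ range p, ((a * m % p : ℕ) : ℤ) ^ k = ∑ a ∈ range p, (a : ℤ) ^ k :=
    sum_range_comp_mul_mod hm fun b => (b : ℤ) ^ k
  have hexpand :
      ∑ a ∈ range p, ((a * m : ℤ) ^ k - p * (k * (a * m : ℤ) ^ (k - 1) * (a * m / p : ℕ)))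
        = m ^ k * ∑ a ∈ range p, (a : ℤ) ^ k
        - p * (k * m ^ (k - 1) * ∑ a ∈ range p, (a : ℤ) ^ (k - 1) * (a * m / p : ℕ)) := by
    simp only [sum_sub_distrib, mul_sum]
    congr 1 <;> exact sum_congr rfl fun a _ => by ring
  have hsum := dvd_sum fun a (_ : a ∈ range p) => hterm a
  rw [sum_sub_distrib, hperm, hexpand] at hsum
  exact (dvd_neg.2 hsum).trans (dvd_of_eq (by ring))

lemma reducesMod_div_of_sq_dvd {X Y : ℤ} (h : (p : ℤ) ^ 2 ∣ Y - p * X) :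
    ReducesMod p (Y / p) X := by
  obtain ⟨t, ht⟩ := h
  have hp : (p : ℚ) ≠ 0 := Nat.cast_ne_zero.2 (Fact.out : p.Prime).ne_zero
  have hY : (Y / p : ℚ) = X + p * t := by
    have hYq := congrArg (Int.cast : ℤ → ℚ) ht
    push_cast at hYq
    field_simp
    linear_combination hYq
  rw [hY]
  simpa using (ReducesMod.intCast X).add ((ReducesMod.intCast (p := p) t).natCast_self_mul)

lemma ZMod.pow_card_sub_one_sub {j : ℕ} (x : ZMod p) (hj : 0 < j) (hjp : j < p - 1) :
    x ^ (p - 1 - j) = (x ^ j)⁻¹ := by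
  rcases eq_or_ne x 0 with rfl | hx
  · rw [zero_pow (by omega), zero_pow (by omega), inv_zero]
  · refine eq_inv_of_mul_eq_one_left ?_
    rw [← pow_add, Nat.sub_add_cancel hjp.le, ZMod.pow_card_sub_one_eq_one hx]

lemma three_mul_floorCubeSum (hp5 : 5 ≤ p) {m : ℕ} (hm : (m : ZMod p) ≠ 0) :
    3 * floorCubeSum p m = ((m : ZMod p) ^ 3 - m) * bernoulli (p - 3) := by
  have hX := reducesMod_div_of_sq_dvd (sq_dvd_sum_pow_sub hm (p - 3))
  have hY : ReducesMod p ((((m : ℤ) ^ (p - 3) - 1) * ∑ a ∈ range p, (a : ℤ) ^ (p - 3) : ℤ) / p)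
      (((m : ZMod p) ^ (p - 3) - 1) * bernoulli (p - 3)) := by
    push_cast
    rw [mul_div_assoc]
    exact (((ReducesMod.natCast m).pow _).sub .one).mul
      (reducesMod_sum_range_pow_div (p := p) (k := p - 3) (by omega))
  have key := hX.unique hY
  have hk : ((p - 3 : ℕ) : ZMod p) = -3 := by
    rw [Nat.cast_sub (by omega), ZMod.natCast_self]
    push_cast
    ring
  have hsum : ∑ a ∈ range p, (a : ZMod p) ^ (p - 3 - 1) * ((a * m / p : ℕ) : ZMod p)
      = floorCubeSum p m := by
    refine sum_congr rfl fun a _ => ?_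
    rw [show p - 3 - 1 = p - 1 - 3 by omega,
      ZMod.pow_card_sub_one_sub (j := 3) _ (by omega) (by omega), div_eq_mul_inv, mul_comm]
  simp only [Int.cast_mul, Int.cast_sum, Int.cast_pow, Int.cast_natCast] at key
  rw [hk, hsum, show p - 3 - 1 = p - 1 - 3 by omega, show p - 3 = p - 1 - 2 by omega,
    ZMod.pow_card_sub_one_sub (j := 3) _ (by omega) (by omega),
    ZMod.pow_card_sub_one_sub (j := 2) _ (by omega) (by omega)] at key
  field_simp at key
  linear_combination -key

lemma reducesMod_floorCubeSum_of_five_le (hp5 : 5 ≤ p) {m : ℕ} (hm : (m : ZMod p) ≠ 0) :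
    ReducesMod p (((m : ℚ) ^ 3 - m) / (3 * m) * bernoulli (p - 3)) (floorCubeSum p m / m) := by
  have h3 : ((3 : ℕ) : ZMod p) ≠ 0 := by
    rw [Ne, ZMod.natCast_eq_zero_iff]
    exact Nat.not_dvd_of_pos_of_lt three_pos (by omega)
  have hrhs := ((((ReducesMod.natCast m).pow 3).sub (.natCast m)).div
    ((ReducesMod.natCast 3).mul (.natCast m)) (mul_ne_zero h3 hm)).mul
    (reducesMod_bernoulli (p := p) (n := p - 3) (by omega))
  push_cast at hrhs h3
  convert hrhs using 1
  field_simp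
  linear_combination three_mul_floorCubeSum hp5 hm

end

lemma reducesMod_floorCubeSum_three {m : ℕ} (hm : (m : ZMod 3) ≠ 0) :
    ReducesMod 3 (((m : ℚ) ^ 3 - m) / (3 * m)) (floorCubeSum 3 m / m) := by
  have hm0 : (m : ℚ) ≠ 0 := by rintro h; simp [Nat.cast_eq_zero.1 h] at hm
  have hq : ((m : ℚ) ^ 3 - m) / (3 * m)
      = (((m ^ 2 - 1) * ∑ a ∈ range 3, (a : ℤ) ^ 2 : ℤ) : ℚ) / (3 : ℕ) / (5 : ℕ) := by
    simp only [sum_range_succ, range_zero, sum_empty]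
    push_cast
    field_simp
  rw [hq]
  convert (reducesMod_div_of_sq_dvd (sq_dvd_sum_pow_sub hm 2)).div (.natCast 5) (by decide) using 1
  have h3 : (3 : ZMod 3) = 0 := rfl
  have h2 : (2 : ZMod 3)⁻¹ = 2 := inv_eq_of_mul_eq_one_right rfl
  have hminv : (m : ZMod 3)⁻¹ = m :=
    inv_eq_of_mul_eq_one_right (by rw [← sq]; exact ZMod.pow_card_sub_one_eq_one hm)
  simp only [floorCubeSum, sum_range_succ, range_zero, sum_empty, Int.cast_mul, Int.cast_natCast,
    Int.cast_add, Nat.cast_zero, Nat.cast_one, Nat.cast_ofNat, zero_mul, mul_zero, one_mul,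
    Nat.zero_div, div_zero, zero_add, div_one, Nat.add_one_sub_one, pow_one, ZMod.pow_card]
  rw [show (5 : ZMod 3) = 2 from rfl]
  simp only [div_eq_mul_inv, hminv, h2]
  linear_combination -(m : ZMod 3) * ((m / 3 : ℕ) + 2 * (2 * m / 3 : ℕ)) * h3

theorem T_p_congr_general (p m : ℕ) (hp : p.Prime) (hp2 : p ≠ 2)
    (hmp : Nat.Coprime m p) :
    ratCong p (T p m p) ((((m : ℚ) ^ 3 - m) / (3 * m)) * bernoulli (p - 3)) := by
  have : Fact p.Prime := ⟨hp⟩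
  have hm : (m : ZMod p) ≠ 0 := by
    rw [Ne, ZMod.natCast_eq_zero_iff]
    exact (Nat.Prime.coprime_iff_not_dvd hp).1 hmp.symm
  refine ratCong_of_reducesMod (reducesMod_T hm) ?_
  obtain rfl | hp5 : p = 3 ∨ 5 ≤ p := by
    have : p ≠ 4 := by rintro rfl; norm_num at hp
    have := hp.two_le
    omega
  · simpa using reducesMod_floorCubeSum_three hm
  · exact reducesMod_floorCubeSum_of_five_le hp5 hm

theorem T_p_congr (p m : ℕ) (hp : p.Prime) (hp2 : p ≠ 2) (hm : 1 ≤ m)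
    (hmp : Nat.Coprime m p) :
    ratCong p (T p m p) ((((m : ℚ) ^ 3 - m) / (3 * m)) * bernoulli (p - 3)) :=
  T_p_congr_general p m hp hp2 hmp
end

section
/- There are no distinct odd primes p and q such that p ≡ 2 (mod q) and q³ ≡ 1 (mod p). -/
/-!
From `q ∣ p - 2` we get `q < p`, so the prime `p` cannot divide `q - 1` and must divide
`q² + q + 1 = k p`. Reducing mod `q` gives `2k ≡ 1`, and `k < q` forces `2k = q + 1`. Then
`(q + 1) p = 2 (q² + q + 1) = 2 q (q + 1) + 2`, so `q + 1 ∣ 2`, which is absurd.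
-/

theorem add_two_le_of_modEq_two {p q : ℕ} (h : p ≡ 2 [MOD q]) (hp : 2 < p) : q + 2 ≤ p := by
  have : q ∣ p - 2 := (Nat.modEq_iff_dvd' hp.le).mp h.symm
  have := Nat.le_of_dvd (by omega) this
  omega

theorem Nat.Prime.dvd_sq_add_add_one_of_pow_three_modEq_one {p q : ℕ} (hp : p.Prime)
    (h : q ^ 3 ≡ 1 [MOD p]) (hq : 2 ≤ q) (hqp : q ≤ p) : p ∣ q ^ 2 + q + 1 := by
  have hdvd : p ∣ q ^ 3 - 1 := (Nat.modEq_iff_dvd' (Nat.one_le_pow _ _ (by omega))).mp h.symm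
  have hfactor : q ^ 3 - 1 = (q - 1) * (q ^ 2 + q + 1) := by
    obtain ⟨r, rfl⟩ : ∃ r, q = r + 1 := ⟨q - 1, by omega⟩
    simp only [Nat.add_sub_cancel]
    ring_nf
    omega
  rw [hfactor] at hdvd
  refine (hp.dvd_mul.mp hdvd).resolve_left fun hdvd' => ?_
  have := Nat.le_of_dvd (by omega) hdvd'
  omega

theorem not_dvd_sq_add_add_one_of_modEq_two {p q : ℕ} (hq : 2 ≤ q) (h : p ≡ 2 [MOD q])
    (hqp : q + 2 ≤ p) : ¬ p ∣ q ^ 2 + q + 1 := by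
  rintro ⟨k, hk⟩
  have hk_pos : 0 < k := Nat.pos_of_ne_zero (by rintro rfl; simp at hk)
  have hk_lt : k < q := by nlinarith
  have hmod : 1 ≡ 2 * k [MOD q] :=
    calc 1 ≡ q * (q + 1) + 1 [MOD q] := (Nat.modEq_iff_dvd' (by omega)).mpr (by simp)
      _ = p * k := by rw [← hk]; ring
      _ ≡ 2 * k [MOD q] := h.mul_right k
  have h2k : 2 * k = q + 1 := by
    obtain ⟨c, hc⟩ := (Nat.modEq_iff_dvd' (by omega)).mp hmod
    obtain rfl : c = 1 := by
      rcases c with _ | _ | c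
      · omega
      · rfl
      · have : q * 2 ≤ q * (c + 1 + 1) := Nat.mul_le_mul_left q (by omega)
        omega
    omega
  have : q + 1 ∣ 2 := by
    have hrel : (q + 1) * p = (q + 1) * (2 * q) + 2 := by nlinarith
    exact (Nat.dvd_add_right (dvd_mul_right _ _)).mp (hrel ▸ dvd_mul_right _ _)
  have := Nat.le_of_dvd (by norm_num) this
  omega

theorem no_p2_q3_pair :
    ¬ ∃ p q : ℕ, p.Prime ∧ q.Prime ∧ p ≠ 2 ∧ q ≠ 2 ∧ p ≠ q ∧
      p ≡ 2 [MOD q] ∧ q ^ 3 ≡ 1 [MOD p] := by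
  rintro ⟨p, q, hp, hq, hp2, -, -, h2, h3⟩
  have hqp : q + 2 ≤ p := add_two_le_of_modEq_two h2 (hp.two_le.lt_of_ne' hp2)
  exact not_dvd_sq_add_add_one_of_modEq_two hq.two_le h2 hqp
    (hp.dvd_sq_add_add_one_of_pow_three_modEq_one h3 hq.two_le (by omega))
end

section
/- Let p be an odd prime and r, m positive integers. Then ∑_{i+j+k = m p^r, i,j,k ∈ P_p} 1/(ijk) ≡ m·Z(p^r) (mod p^r), where the sum is over ordered triples of positive integers i, j, k coprime to p with i + j + k = m p^r, as a congruence of rational numbers whose denominators are coprime to p. -/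
open Finset

/-- `Z n = ∑_{i+j+k=n, i,j,k coprime to n} 1/(ijk)` over ordered triples of
positive integers. -/
def Z (n : ℕ) : ℚ :=
  ∑ i ∈ Finset.Icc 1 n, ∑ j ∈ Finset.Icc 1 n, ∑ k ∈ Finset.Icc 1 n,
    if i + j + k = n ∧ Nat.Coprime i n ∧ Nat.Coprime j n ∧ Nat.Coprime k n then
      1 / ((i : ℚ) * j * k)
    else 0

/-- `Zp n p = ∑_{i+j+k=n, i,j,k coprime to p} 1/(ijk)` over ordered triples of
positive integers coprime to `p`. -/
def Zp (n p : ℕ) : ℚ :=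
  ∑ i ∈ Finset.Icc 1 n, ∑ j ∈ Finset.Icc 1 n, ∑ k ∈ Finset.Icc 1 n,
    if i + j + k = n ∧ Nat.Coprime i p ∧ Nat.Coprime j p ∧ Nat.Coprime k p then
      1 / ((i : ℚ) * j * k)
    else 0

/-!
Put `q = p ^ r`; being coprime to `p` or to `q` is the same. Write each summation variable of
`Zp (m q)` as `i = x q + a` with `0 ≤ x < m` and `1 ≤ a ≤ q`. Modulo `q`, `1/(ijk) ≡ 1/(abc)`, and
`a + b + c`, a multiple of `q` strictly between `0` and `3q`, is `q` or `2q`. Hence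
`Zp (m q) ≡ N₁ Z(q) + N₂ S`, where `S` is the sum over `a + b + c = 2q` and `Nₜ` counts the
`(x, y, z) ∈ [0, m)³` with `x + y + z + t = m`. The reflection `a ↦ q - a` gives `S ≡ -Z(q)`,
and `N₁ = N₂ + m`.
-/

/-- The rationals `≡ 0 (mod N)`: those of the form `N a / b` with `b` coprime to `N`. -/
def ratMultiples (N : ℕ) : AddSubgroup ℚ where
  carrier := {z | ∃ a b : ℤ, IsCoprime b N ∧ z * b = N * a}
  zero_mem' := ⟨0, 1, isCoprime_one_left, by simp⟩
  add_mem' := by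
    rintro x y ⟨a, b, hb, hx⟩ ⟨c, d, hd, hy⟩
    refine ⟨a * d + c * b, b * d, hb.mul_left hd, ?_⟩
    push_cast
    linear_combination (d : ℚ) * hx + (b : ℚ) * hy
  neg_mem' := by
    rintro x ⟨a, b, hb, hx⟩
    exact ⟨-a, b, hb, by push_cast; linear_combination -hx⟩

theorem eq_one_of_isCoprime_zero_left {N : ℕ} (h : IsCoprime (0 : ℤ) N) : N = 1 :=
  Nat.isUnit_iff.mp (Int.ofNat_isUnit.mp (isCoprime_zero_left.mp h))

theorem mem_ratMultiples_one (z : ℚ) : z ∈ ratMultiples 1 :=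
  ⟨z.num, z.den, isCoprime_one_right, by simp [Rat.mul_den_eq_num]⟩

theorem ratCong_of_sub_mem {N : ℕ} {x y : ℚ} (h : x - y ∈ ratMultiples N) : ratCong N x y := by
  obtain ⟨a, b, hb, h⟩ := h
  set z := x - y
  rcases eq_or_ne b 0 with rfl | hb0
  · obtain rfl := eq_one_of_isCoprime_zero_left hb
    exact ⟨Nat.coprime_one_right _, by simp⟩
  have hden : (z.den : ℤ) ∣ b := by
    have hz : z = ((N * a : ℤ) : ℚ) / b := by
      rw [eq_div_iff (by exact_mod_cast hb0), h]; push_cast; ring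
    rw [hz, ← Rat.divInt_eq_div]
    exact Rat.den_dvd _ _
  refine ⟨Nat.isCoprime_iff_coprime.mp (hb.of_isCoprime_of_dvd_left hden), ?_⟩
  have hnum : z.num * b = N * (a * z.den) := by
    have : (z.num : ℚ) * b = N * (a * z.den) := by
      rw [← Rat.mul_den_eq_num]
      linear_combination (z.den : ℚ) * h
    exact_mod_cast this
  exact hb.symm.dvd_of_dvd_mul_right ⟨_, hnum⟩

theorem one_div_sub_one_div_mem {N : ℕ} {u v : ℤ} (hu : IsCoprime u N) (hv : IsCoprime v N)
    (huv : u ≡ v [ZMOD N]) : 1 / (u : ℚ) - 1 / v ∈ ratMultiples N := by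
  rcases eq_or_ne u 0 with rfl | hu0
  · exact eq_one_of_isCoprime_zero_left hu ▸ mem_ratMultiples_one _
  rcases eq_or_ne v 0 with rfl | hv0
  · exact eq_one_of_isCoprime_zero_left hv ▸ mem_ratMultiples_one _
  obtain ⟨t, ht⟩ := Int.modEq_iff_dvd.mp huv
  refine ⟨t, u * v, hu.mul_left hv, ?_⟩
  have hvu : (v : ℚ) - u = N * t := by exact_mod_cast ht
  push_cast
  field_simp
  linear_combination hvu

theorem sum_Icc_one_add {M : Type*} [AddCommMonoid M] (n q : ℕ) (f : ℕ → M) :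
    ∑ i ∈ Icc 1 (n + q), f i = ∑ i ∈ Icc 1 n, f i + ∑ a ∈ Icc 1 q, f (n + a) := by
  have hIcc := Finset.Icc_add_one_left_eq_Ioc (α := ℕ) 0
  have hshift : Ioc n (n + q) = (Ioc 0 q).map (addLeftEmbedding n) := by simp
  simp only [zero_add] at hIcc
  rw [hIcc, hIcc, hIcc, ← sum_Ioc_consecutive f (Nat.zero_le n) (Nat.le_add_right n q), hshift,
    sum_map]
  rfl

theorem sum_Icc_mul {M : Type*} [AddCommMonoid M] (m q : ℕ) (f : ℕ → M) :
    ∑ i ∈ Icc 1 (m * q), f i = ∑ a ∈ Icc 1 q, ∑ x ∈ range m, f (x * q + a) := by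
  induction m with
  | zero => simp
  | succ m ih =>
    simp only [add_one_mul, sum_Icc_one_add, ih, sum_range_succ, sum_add_distrib]

theorem sum_Icc_mul_cube {M : Type*} [AddCommMonoid M] (m q : ℕ) (f : ℕ → ℕ → ℕ → M) :
    ∑ i ∈ Icc 1 (m * q), ∑ j ∈ Icc 1 (m * q), ∑ k ∈ Icc 1 (m * q), f i j k =
      ∑ a ∈ Icc 1 q, ∑ b ∈ Icc 1 q, ∑ c ∈ Icc 1 q, ∑ x ∈ range m, ∑ y ∈ range m,
        ∑ z ∈ range m, f (x * q + a) (y * q + b) (z * q + c) := by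
  simp only [sum_Icc_mul]
  refine sum_congr rfl fun a _ => ?_
  rw [sum_comm]
  refine sum_congr rfl fun b _ => ?_
  exact (sum_congr rfl fun x _ => sum_comm).trans sum_comm

theorem sum_Icc_reflect {M : Type*} [AddCommMonoid M] {q : ℕ} {g : ℕ → M} (h0 : g 0 = 0)
    (hq : g q = 0) : ∑ a ∈ Icc 1 q, g (q - a) = ∑ a ∈ Icc 1 q, g a := by
  have hrange : ∀ f : ℕ → M, ∑ a ∈ range (q + 1), f a = f 0 + ∑ a ∈ Icc 1 q, f a := by
    intro f
    rw [range_eq_Ico, sum_eq_sum_Ico_succ_bot (Nat.succ_pos q)]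
    rfl
  have := sum_range_reflect g (q + 1)
  rwa [add_tsub_cancel_right, hrange, hrange, Nat.sub_zero, hq, h0, zero_add, zero_add] at this

theorem sum_Icc_reflect_cube {M : Type*} [AddCommMonoid M] {q : ℕ} {F : ℕ → ℕ → ℕ → M}
    (hF : ∀ a b c, (a = 0 ∨ a = q) ∨ (b = 0 ∨ b = q) ∨ (c = 0 ∨ c = q) → F a b c = 0) :
    ∑ a ∈ Icc 1 q, ∑ b ∈ Icc 1 q, ∑ c ∈ Icc 1 q, F (q - a) (q - b) (q - c) =
      ∑ a ∈ Icc 1 q, ∑ b ∈ Icc 1 q, ∑ c ∈ Icc 1 q, F a b c := by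
  rw [← sum_Icc_reflect (g := fun a => ∑ b ∈ Icc 1 q, ∑ c ∈ Icc 1 q, F a b c)
    (sum_eq_zero fun b _ => sum_eq_zero fun c _ => hF _ _ _ (by simp))
    (sum_eq_zero fun b _ => sum_eq_zero fun c _ => hF _ _ _ (by simp))]
  refine sum_congr rfl fun a _ => ?_
  rw [← sum_Icc_reflect (g := fun b => ∑ c ∈ Icc 1 q, F (q - a) b c)
    (sum_eq_zero fun c _ => hF _ _ _ (by simp)) (sum_eq_zero fun c _ => hF _ _ _ (by simp))]
  refine sum_congr rfl fun b _ => ?_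
  rw [← sum_Icc_reflect (g := fun c => F (q - a) (q - b) c) (hF _ _ _ (by simp))
    (hF _ _ _ (by simp))]

def coprimeInvProd (q i j k : ℕ) : ℚ :=
  if i.Coprime q ∧ j.Coprime q ∧ k.Coprime q then 1 / ((i : ℚ) * j * k) else 0

theorem isCoprime_natCast_mul_mul {q i j k : ℕ} (h : i.Coprime q ∧ j.Coprime q ∧ k.Coprime q) :
    IsCoprime ((i * j * k : ℕ) : ℤ) q :=
  Nat.isCoprime_iff_coprime.mpr ((h.1.mul_left h.2.1).mul_left h.2.2)

theorem coprimeInvProd_add_mul_sub_mem (q x y z a b c : ℕ) :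
    coprimeInvProd q (x * q + a) (y * q + b) (z * q + c) - coprimeInvProd q a b c ∈
      ratMultiples q := by
  have hcop : ∀ t w : ℕ, (t * q + w).Coprime q ↔ w.Coprime q := fun t w => by
    rw [add_comm]; exact Nat.coprime_add_mul_right_left w q t
  unfold coprimeInvProd
  simp only [hcop]
  split_ifs with h
  · have h' : (x * q + a).Coprime q ∧ (y * q + b).Coprime q ∧ (z * q + c).Coprime q := by
      simpa only [hcop] using h
    have hq : (q : ℤ) ≡ 0 [ZMOD q] := Int.modEq_zero_iff_dvd.mpr dvd_rfl
    have hmod : ((x * q + a) * (y * q + b) * (z * q + c) : ℤ) ≡ a * b * c [ZMOD q] :=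
      calc ((x * q + a) * (y * q + b) * (z * q + c) : ℤ)
          ≡ (x * 0 + a) * (y * 0 + b) * (z * 0 + c) [ZMOD q] := by gcongr
        _ = a * b * c := by ring
    have := one_div_sub_one_div_mem (isCoprime_natCast_mul_mul h') (isCoprime_natCast_mul_mul h)
      (by push_cast; exact hmod)
    push_cast at this ⊢
    exact this
  · simp

theorem coprimeInvProd_add_sub_mem {q a b c : ℕ} (habc : a + b + c = q) :
    coprimeInvProd q a b c + coprimeInvProd q (q - a) (q - b) (q - c) ∈ ratMultiples q := by
  obtain ⟨ha, hb, hc⟩ : a ≤ q ∧ b ≤ q ∧ c ≤ q := by omega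
  have hcop : (q - a).Coprime q ∧ (q - b).Coprime q ∧ (q - c).Coprime q ↔
      a.Coprime q ∧ b.Coprime q ∧ c.Coprime q := by
    rw [Nat.coprime_self_sub_left ha, Nat.coprime_self_sub_left hb, Nat.coprime_self_sub_left hc]
  unfold coprimeInvProd
  rw [if_congr hcop rfl rfl]
  split_ifs with h
  · have hq : (0 : ℤ) ≡ q [ZMOD q] := (Int.modEq_zero_iff_dvd.mpr dvd_rfl).symm
    have hmod : ((a * b * c : ℕ) : ℤ) ≡ -(((q - a) * (q - b) * (q - c) : ℕ) : ℤ) [ZMOD q] := by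
      push_cast [Nat.cast_sub ha, Nat.cast_sub hb, Nat.cast_sub hc]
      calc (a * b * c : ℤ) = -((0 - a) * (0 - b) * (0 - c)) := by ring
        _ ≡ -((q - a) * (q - b) * (q - c)) [ZMOD q] := by gcongr
    have := one_div_sub_one_div_mem (isCoprime_natCast_mul_mul h)
      (isCoprime_natCast_mul_mul (hcop.mpr h)).neg_left hmod
    push_cast at this ⊢
    rwa [one_div_neg_eq_neg_one_div, sub_neg_eq_add] at this
  · simp

theorem coprimeInvProd_eq_zero {q a b c : ℕ} (hq : q ≠ 1)
    (h : (a = 0 ∨ a = q) ∨ (b = 0 ∨ b = q) ∨ (c = 0 ∨ c = q)) : coprimeInvProd q a b c = 0 := by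
  refine if_neg fun hcop => ?_
  obtain ⟨ha, hb, hc⟩ := hcop
  rcases h with (rfl | rfl) | (rfl | rfl) | (rfl | rfl) <;>
    simp_all [Nat.coprime_zero_left, Nat.coprime_self]

theorem lt_of_mem_Icc_of_coprime {q d : ℕ} (hq : q ≠ 1) (hd : d ∈ Icc 1 q) (hcop : d.Coprime q) :
    d < q :=
  lt_of_le_of_ne (mem_Icc.mp hd).2 fun h => hq ((Nat.coprime_self q).mp (h ▸ hcop))

def tripleSum (n q s : ℕ) : ℚ :=
  ∑ i ∈ Icc 1 n, ∑ j ∈ Icc 1 n, ∑ k ∈ Icc 1 n, if i + j + k = s then coprimeInvProd q i j k else 0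

theorem Zp_eq_tripleSum (n q : ℕ) : Zp n q = tripleSum n q n := by
  simp only [Zp, tripleSum, coprimeInvProd, ite_and]

theorem Zp_pow_right (n p : ℕ) {r : ℕ} (hr : r ≠ 0) : Zp n (p ^ r) = Zp n p := by
  simp only [Zp, Nat.coprime_pow_right_iff (Nat.pos_of_ne_zero hr)]

def tripleCount (m t : ℕ) : ℕ :=
  ∑ x ∈ range m, ∑ y ∈ range m, ∑ z ∈ range m, if x + y + z + t = m then 1 else 0

theorem tripleCount_one (m : ℕ) : tripleCount m 1 = tripleCount m 2 + m := by
  cases m with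
  | zero => simp [tripleCount]
  | succ m =>
    have hzero : ∑ y ∈ range (m + 1), ∑ z ∈ range (m + 1),
        (if 0 + y + z + 1 = m + 1 then 1 else 0) = m + 1 := by
      have hone : ∀ y ∈ range (m + 1),
          ∑ z ∈ range (m + 1), (if 0 + y + z + 1 = m + 1 then 1 else 0) = 1 := by
        intro y hy
        rw [mem_range] at hy
        rw [sum_eq_single_of_mem (m - y) (mem_range.mpr (by omega))
          (fun z _ hz => if_neg (by omega)), if_pos (by omega)]
      rw [sum_congr rfl hone]; simp
    have htop : ∑ y ∈ range (m + 1), ∑ z ∈ range (m + 1),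
        (if m + y + z + 2 = m + 1 then 1 else 0) = 0 :=
      sum_eq_zero fun y _ => sum_eq_zero fun z _ => if_neg (by omega)
    rw [tripleCount, sum_range_succ', hzero, tripleCount, sum_range_succ _ m, htop, add_zero]
    congr 1
    refine sum_congr rfl fun x _ => sum_congr rfl fun y _ => sum_congr rfl fun z _ => ?_
    split_ifs <;> omega

theorem tripleCount_mul (m t : ℕ) (w : ℚ) :
    (tripleCount m t : ℚ) * w =
      ∑ x ∈ range m, ∑ y ∈ range m, ∑ z ∈ range m, if x + y + z + t = m then w else 0 := by
  simp only [tripleCount, Nat.cast_sum, Nat.cast_ite, Nat.cast_one, Nat.cast_zero, sum_mul,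
    ite_mul, one_mul, zero_mul]

theorem mul_add_eq_mul_iff {q s t m : ℕ} (hs0 : 0 < s) (hs : s < 3 * q) :
    t * q + s = m * q ↔ (s = q ∧ t + 1 = m) ∨ (s = 2 * q ∧ t + 2 = m) := by
  constructor
  · intro h
    have hq : 0 < q := by omega
    obtain ⟨k, rfl⟩ : q ∣ s := by
      have : s = m * q - t * q := by omega
      rw [this, ← Nat.sub_mul]
      exact dvd_mul_left q _
    have hk : k < 3 := by nlinarith
    interval_cases k
    · omega
    · left; refine ⟨by ring, Nat.eq_of_mul_eq_mul_right hq ?_⟩; linarith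
    · right; refine ⟨by ring, Nat.eq_of_mul_eq_mul_right hq ?_⟩; linarith
  · rintro (⟨rfl, rfl⟩ | ⟨rfl, rfl⟩) <;> ring

theorem sum_range_cube_eq_tripleCount {q a b c : ℕ} (m : ℕ) (hq : q ≠ 1) (ha : a ∈ Icc 1 q)
    (hb : b ∈ Icc 1 q) (hc : c ∈ Icc 1 q) :
    ∑ x ∈ range m, ∑ y ∈ range m, ∑ z ∈ range m,
        (if x * q + a + (y * q + b) + (z * q + c) = m * q then coprimeInvProd q a b c else 0) =
      tripleCount m 1 * (if a + b + c = q then coprimeInvProd q a b c else 0) +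
        tripleCount m 2 * (if a + b + c = 2 * q then coprimeInvProd q a b c else 0) := by
  by_cases hcop : a.Coprime q ∧ b.Coprime q ∧ c.Coprime q
  swap
  · simp [coprimeInvProd, hcop]
  have ha' := lt_of_mem_Icc_of_coprime hq ha hcop.1
  have hb' := lt_of_mem_Icc_of_coprime hq hb hcop.2.1
  have hc' := lt_of_mem_Icc_of_coprime hq hc hcop.2.2
  simp only [mem_Icc] at ha hb hc
  have hblock : ∀ x y z, x * q + a + (y * q + b) + (z * q + c) = m * q ↔
      (a + b + c = q ∧ x + y + z + 1 = m) ∨ (a + b + c = 2 * q ∧ x + y + z + 2 = m) := by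
    intro x y z
    rw [show x * q + a + (y * q + b) + (z * q + c) = (x + y + z) * q + (a + b + c) by ring]
    exact mul_add_eq_mul_iff (by omega) (by omega)
  simp only [hblock, tripleCount_mul]
  have hq2 : q ≠ 2 * q := by omega
  obtain hs | hs | ⟨hs1, hs2⟩ :
      a + b + c = q ∨ a + b + c = 2 * q ∨ (a + b + c ≠ q ∧ a + b + c ≠ 2 * q) := by omega
  · simp [hs, hq2]
  · simp [hs, hq2.symm]
  · simp [hs1, hs2]

theorem tripleSum_mul_sub_mem {q : ℕ} (m : ℕ) (hq : q ≠ 1) :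
    tripleSum (m * q) q (m * q) -
        (tripleCount m 1 * tripleSum q q q + tripleCount m 2 * tripleSum q q (2 * q)) ∈
      ratMultiples q := by
  have hreduced : tripleCount m 1 * tripleSum q q q + tripleCount m 2 * tripleSum q q (2 * q) =
      ∑ a ∈ Icc 1 q, ∑ b ∈ Icc 1 q, ∑ c ∈ Icc 1 q, ∑ x ∈ range m, ∑ y ∈ range m,
        ∑ z ∈ range m, if x * q + a + (y * q + b) + (z * q + c) = m * q
          then coprimeInvProd q a b c else 0 := by
    simp only [tripleSum, mul_sum, ← sum_add_distrib]
    exact sum_congr rfl fun a ha => sum_congr rfl fun b hb => sum_congr rfl fun c hc =>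
      (sum_range_cube_eq_tripleCount m hq ha hb hc).symm
  rw [hreduced, tripleSum, sum_Icc_mul_cube]
  simp only [← sum_sub_distrib]
  refine sum_mem fun a _ => sum_mem fun b _ => sum_mem fun c _ =>
    sum_mem fun x _ => sum_mem fun y _ => sum_mem fun z _ => ?_
  split_ifs
  · exact coprimeInvProd_add_mul_sub_mem q x y z a b c
  · simp

theorem tripleSum_add_tripleSum_two_mul_mem {q : ℕ} (hq : q ≠ 1) :
    tripleSum q q q + tripleSum q q (2 * q) ∈ ratMultiples q := by
  rw [tripleSum, tripleSum, ← sum_Icc_reflect_cube (F := fun a b c =>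
    if a + b + c = 2 * q then coprimeInvProd q a b c else 0)
    fun a b c h => by simp only [coprimeInvProd_eq_zero hq h, ite_self]]
  simp only [← sum_add_distrib]
  refine sum_mem fun a ha => sum_mem fun b hb => sum_mem fun c hc => ?_
  simp only [mem_Icc] at ha hb hc
  simp only [show q - a + (q - b) + (q - c) = 2 * q ↔ a + b + c = q by omega]
  split_ifs with h
  · exact coprimeInvProd_add_sub_mem h
  · simp

theorem Zp_mul_self_congr (m q : ℕ) : ratCong q (Zp (m * q) q) (m * Z q) := by
  rcases eq_or_ne q 1 with rfl | hq
  · exact ratCong_of_sub_mem (mem_ratMultiples_one _)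
  have hZ : Z q = tripleSum q q q := Zp_eq_tripleSum q q
  have hcount : (tripleCount m 1 : ℚ) = tripleCount m 2 + m := by
    exact_mod_cast tripleCount_one m
  have hsplit : Zp (m * q) q - m * Z q =
      (tripleSum (m * q) q (m * q) -
        (tripleCount m 1 * tripleSum q q q + tripleCount m 2 * tripleSum q q (2 * q))) +
      tripleCount m 2 • (tripleSum q q q + tripleSum q q (2 * q)) := by
    rw [Zp_eq_tripleSum, hZ, hcount, nsmul_eq_mul]
    ring
  apply ratCong_of_sub_mem
  rw [hsplit]
  exact add_mem (tripleSum_mul_sub_mem m hq)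
    (nsmul_mem (tripleSum_add_tripleSum_two_mul_mem hq) _)

theorem Zp_mul_congr_general (p r m : ℕ) (hr : 1 ≤ r) :
    ratCong (p ^ r) (Zp (m * p ^ r) p) ((m : ℚ) * Z (p ^ r)) := by
  rw [← Zp_pow_right _ p (by omega : r ≠ 0)]
  exact Zp_mul_self_congr m (p ^ r)

theorem Zp_mul_congr (p r m : ℕ) (hp : p.Prime) (hp2 : p ≠ 2) (hr : 1 ≤ r) (hm : 1 ≤ m) :
    ratCong (p ^ r) (Zp (m * p ^ r) p) ((m : ℚ) * Z (p ^ r)) :=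
  Zp_mul_congr_general p r m hr
end

section
/- Let p be an odd prime, l a positive integer, and s a positive integer. Consider H = ∑_{k=1, (k,p)=1}^{p^l - 1} 1/k^s. Then: (i) if s is odd, (p-1) | (s+1), and p ∤ s, then H ≡ 0 (mod p^{2l-1}); (ii) if s is odd and ((p-1) ∤ (s+1) or p | s), then H ≡ 0 (mod p^{2l}); (iii) if s is even and (p-1) | s, then H ≡ 0 (mod p^{l-1}); (iv) if s is even and (p-1) ∤ s, then H ≡ 0 (mod p^l). -/
/-!
Work in `ℤ_[p]`, where `H` becomes the sum `T s` of `k⁻ˢ` over the reduced residues `k` mod `p ^ l`.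
Since `k ↦ k⁻¹` permutes the units of `ZMod (p ^ l)`, `T s ≡ ∑ kˢ (mod p ^ l)`. This integer power
sum is divisible by `p ^ (l - 1)` in general, because lifting the residues mod `p ^ m` to
residues mod `p ^ (m + 1)` multiplies it by `p` modulo `p ^ m`; and by `p ^ l` when `p - 1 ∤ s`,
because it is fixed by multiplication with `cˢ ≢ 1` for a lift `c` of a primitive root mod `p`.
For odd `s`, pairing `k` with `p ^ l - k` gives `2 T s ≡ -s p ^ l T (s + 1) (mod p ^ (2 l))`, and
the bounds on `T (s + 1)` give the two odd cases.
-/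

open Finset

/-- `H p l s` is the sum over positive integers `k < p ^ l` coprime to `p` of `1 / k ^ s`. -/
def H (p l s : ℕ) : ℚ :=
  ∑ k ∈ Finset.Ico 1 (p ^ l), (if Nat.Coprime k p then 1 / (k : ℚ) ^ s else 0)

def reducedResidues (n : ℕ) : Finset ℕ := (range n).filter n.Coprime

lemma mem_reducedResidues {n k : ℕ} : k ∈ reducedResidues n ↔ k < n ∧ n.Coprime k := by
  simp [reducedResidues]

section Residues

variable {M : Type*} [AddCommMonoid M]

theorem Finset.sum_range_mul (g : ℕ → M) (n d : ℕ) :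
    ∑ k ∈ range (n * d), g k = ∑ j ∈ range d, ∑ r ∈ range n, g (n * j + r) := by
  induction d with
  | zero => simp
  | succ d ih => rw [mul_add_one, sum_range_add, ih, sum_range_succ]

theorem sum_reducedResidues_eq_sum_units (n : ℕ) [NeZero n] (f : ZMod n → M) :
    ∑ k ∈ reducedResidues n, f k = ∑ u : (ZMod n)ˣ, f u := by
  refine sum_bij' (fun k hk => ZMod.unitOfCoprime k (mem_reducedResidues.1 hk).2.symm)
    (fun u _ => (u : ZMod n).val) (fun _ _ => mem_univ _) (fun u _ => ?_) (fun k hk => ?_)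
    (fun u _ => ?_) (fun _ _ => rfl)
  · exact mem_reducedResidues.2 ⟨ZMod.val_lt _, (ZMod.val_coe_unit_coprime u).symm⟩
  · exact ZMod.val_natCast_of_lt (mem_reducedResidues.1 hk).1
  · ext; simp

theorem sub_mem_reducedResidues {n k : ℕ} (hn : 1 < n) (hk : k ∈ reducedResidues n) :
    n - k ∈ reducedResidues n := by
  rw [mem_reducedResidues] at hk ⊢
  have hk0 : k ≠ 0 := by
    rintro rfl
    exact hn.ne' (Nat.coprime_zero_right n |>.1 hk.2)
  exact ⟨by omega, (Nat.coprime_self_sub_right hk.1.le).2 hk.2⟩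

theorem sum_reducedResidues_reflect {n : ℕ} (hn : 1 < n) (f : ℕ → M) :
    ∑ k ∈ reducedResidues n, f (n - k) = ∑ k ∈ reducedResidues n, f k := by
  have hinv : ∀ k ∈ reducedResidues n, n - (n - k) = k := fun k hk => by
    have := (mem_reducedResidues.1 hk).1; omega
  exact sum_nbij' (n - ·) (n - ·) (fun _ => sub_mem_reducedResidues hn)
    (fun _ => sub_mem_reducedResidues hn) hinv hinv (fun _ _ => rfl)

theorem sum_reducedResidues_pow_succ {p m : ℕ} (hm : 1 ≤ m) (f : ℕ → M) :
    ∑ k ∈ reducedResidues (p ^ (m + 1)), f k =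
      ∑ j ∈ range p, ∑ r ∈ reducedResidues (p ^ m), f (p ^ m * j + r) := by
  obtain ⟨m, rfl⟩ : ∃ m', m = m' + 1 := ⟨m - 1, by omega⟩
  simp only [reducedResidues, sum_filter, pow_succ _ (m + 1), Finset.sum_range_mul]
  refine sum_congr rfl fun j _ => sum_congr rfl fun r _ => if_congr ?_ rfl rfl
  rw [← pow_succ, Nat.coprime_pow_left_iff (by omega), Nat.coprime_pow_left_iff (by omega),
    pow_succ', mul_assoc, Nat.coprime_mul_left_add_right]

end Residues

def coprimePowerSum (n s : ℕ) : ℤ := ∑ k ∈ reducedResidues n, (k : ℤ) ^ s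

theorem coprimePowerSum_pow_succ_modEq {p m : ℕ} (hm : 1 ≤ m) (s : ℕ) :
    coprimePowerSum (p ^ (m + 1)) s ≡ p * coprimePowerSum (p ^ m) s [ZMOD p ^ m] :=
  calc coprimePowerSum (p ^ (m + 1)) s
      = ∑ j ∈ range p, ∑ r ∈ reducedResidues (p ^ m), ((p ^ m * j + r : ℕ) : ℤ) ^ s := by
        rw [coprimePowerSum, sum_reducedResidues_pow_succ hm]
    _ ≡ ∑ j ∈ range p, ∑ r ∈ reducedResidues (p ^ m), (r : ℤ) ^ s [ZMOD p ^ m] :=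
        Int.ModEq.sum fun j _ => Int.ModEq.sum fun r _ =>
          (Int.modEq_iff_dvd.2 ⟨-j, by push_cast; ring⟩).pow s
    _ = p * coprimePowerSum (p ^ m) s := by
        rw [sum_const, card_range, nsmul_eq_mul, coprimePowerSum]

theorem pow_pred_dvd_coprimePowerSum (p s : ℕ) :
    ∀ m, (p : ℤ) ^ (m - 1) ∣ coprimePowerSum (p ^ m) s
  | 0 | 1 => by simp
  | m + 2 => by
    have hrec := (coprimePowerSum_pow_succ_modEq (p := p) (m := m + 1) (by omega) s).symm.dvd
    have ih : (p : ℤ) ^ (m + 1) ∣ p * coprimePowerSum (p ^ (m + 1)) s :=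
      pow_succ' (p : ℤ) m ▸ mul_dvd_mul_left _ (pow_pred_dvd_coprimePowerSum p s (m + 1))
    simpa using dvd_add hrec ih

theorem MonoidHom.sum_eq_zero_of_isUnit_sub_one {G R : Type*} [Group G] [Fintype G] [CommRing R]
    (f : G →* R) {g : G} (hg : IsUnit (f g - 1)) : ∑ x, f x = 0 := by
  have hfix : f g * ∑ x, f x = ∑ x, f x := by
    rw [mul_sum]
    exact Fintype.sum_equiv (Equiv.mulLeft g) _ _ fun x => (map_mul f g x).symm
  rw [← hg.mul_right_eq_zero, sub_mul, hfix, one_mul, sub_self]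

instance ZMod.subsingleton_pow_zero {p : ℕ} : Subsingleton (ZMod (p ^ 0)) := by
  rw [pow_zero]; infer_instance

section ZModPrimePow

variable {p : ℕ} [hp : Fact p.Prime]

theorem ZMod.isUnit_of_isUnit_cast {m : ℕ} {x : ZMod (p ^ m)}
    (hx : IsUnit (x.cast : ZMod p)) : IsUnit x := by
  rcases Nat.eq_zero_or_pos m with rfl | hm
  · exact isUnit_of_subsingleton x
  have : NeZero (p ^ m) := ⟨pow_ne_zero m hp.out.ne_zero⟩
  rw [← ZMod.natCast_zmod_val x, ZMod.isUnit_natCast_iff_not_dvd_pow hp.out hm]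
  rw [ZMod.cast_eq_val] at hx
  intro hdvd
  rw [(ZMod.natCast_eq_zero_iff _ _).2 hdvd] at hx
  exact not_isUnit_zero hx

theorem ZMod.sum_units_pow_eq_zero {s : ℕ} (hs : ¬ (p - 1) ∣ s) (m : ℕ) :
    ∑ u : (ZMod (p ^ m))ˣ, (u : ZMod (p ^ m)) ^ s = 0 := by
  rcases Nat.eq_zero_or_pos m with rfl | hm
  · exact Subsingleton.elim _ _
  obtain ⟨γ, hγ⟩ := IsCyclic.exists_generator (α := (ZMod p)ˣ)
  have hγs : γ ^ s ≠ 1 := fun h => hs <| by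
    rw [← ZMod.card_units p, ← Nat.card_eq_fintype_card,
      ← orderOf_eq_card_of_forall_mem_zpowers hγ]
    exact orderOf_dvd_of_pow_eq_one h
  have hdvd : p ∣ p ^ m := dvd_pow_self p hm.ne'
  obtain ⟨c, hc⟩ := ZMod.unitsMap_surjective hdvd γ
  refine ((Units.coeHom _).comp (powMonoidHom s)).sum_eq_zero_of_isUnit_sub_one
    (g := c) (ZMod.isUnit_of_isUnit_cast ?_)
  change IsUnit (ZMod.castHom hdvd (ZMod p) ((c : ZMod (p ^ m)) ^ s - 1))
  rw [map_sub, map_pow, map_one, ZMod.castHom_apply, ← ZMod.unitsMap_val hdvd, hc]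
  refine (sub_ne_zero.2 fun h => hγs ?_).isUnit
  rwa [← Units.val_pow_eq_pow_val, Units.val_eq_one] at h

theorem pow_dvd_coprimePowerSum {s : ℕ} (hs : ¬ (p - 1) ∣ s) (m : ℕ) :
    (p : ℤ) ^ m ∣ coprimePowerSum (p ^ m) s := by
  have : NeZero (p ^ m) := ⟨pow_ne_zero m hp.out.ne_zero⟩
  rw [← Int.natCast_pow, ← ZMod.intCast_zmod_eq_zero_iff_dvd, coprimePowerSum]
  push_cast
  rw [sum_reducedResidues_eq_sum_units (p ^ m) (· ^ s)]
  exact ZMod.sum_units_pow_eq_zero hs m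

end ZModPrimePow

-- Clearing the denominators `x ^ (s + 1) * y ^ s`, this is the expansion of
-- `y ^ s = -(x - q) ^ s` to first order in `q`.
theorem sq_dvd_inv_pow_add_inv_pow {R : Type*} [CommRing R] {q x y a b : R} (hxy : x + y = q)
    (ha : a * x = 1) (hb : b * y = 1) {s : ℕ} (hs : Odd s) :
    q ^ 2 ∣ a ^ s + b ^ s + s * q * a ^ (s + 1) := by
  have hys : y ^ s = -(x + -q) ^ s := by
    rw [show y = -(x + -q) by linear_combination hxy, hs.neg_pow]
  have hxs : x * x ^ (s - 1) = x ^ s := by rw [← pow_succ', Nat.sub_add_cancel hs.pos]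
  obtain ⟨c, hc⟩ := sq_dvd_add_pow_sub_sub (-q) x s
  have hcleared : x * y ^ s + x ^ (s + 1) + s * q * y ^ s =
      q ^ 2 * (-x * c + s ^ 2 * x ^ (s - 1) - s * q * c) := by
    rw [hys]; linear_combination (-x - s * q) * hc + s * q * hxs
  have hcleared_mul : (x * y ^ s + x ^ (s + 1) + s * q * y ^ s) * (a ^ (s + 1) * b ^ s) =
      a ^ s + b ^ s + s * q * a ^ (s + 1) :=
    calc _ = a ^ s * (a * x) * (b * y) ^ s + (a * x) ^ (s + 1) * b ^ s +
          s * q * a ^ (s + 1) * (b * y) ^ s := by ring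
      _ = _ := by rw [ha, hb]; ring
  rw [← hcleared_mul, hcleared, mul_assoc]
  exact dvd_mul_right _ _

namespace PadicInt

variable {p : ℕ} [Fact p.Prime]

theorem coe_inv {z : ℤ_[p]} (hz : ‖z‖ = 1) : ((z.inv : ℤ_[p]) : ℚ_[p]) = (z : ℚ_[p])⁻¹ := by
  have h := congrArg ((↑) : ℤ_[p] → ℚ_[p]) (mul_inv hz)
  rw [coe_mul, coe_one] at h
  exact (inv_eq_of_mul_eq_one_right h).symm

theorem toZModPow_inv {z : ℤ_[p]} (hz : ‖z‖ = 1) (n : ℕ) :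
    toZModPow n z.inv = (toZModPow n z)⁻¹ :=
  (ZMod.inv_eq_of_mul_eq_one _ _ _ (by rw [← map_mul, mul_inv hz, map_one])).symm

theorem pow_dvd_iff_toZModPow_eq_zero (n : ℕ) (x : ℤ_[p]) :
    (p : ℤ_[p]) ^ n ∣ x ↔ toZModPow n x = 0 := by
  rw [← Ideal.mem_span_singleton, ← ker_toZModPow, RingHom.mem_ker]

end PadicInt

section Padic

open PadicInt

variable {p : ℕ} [hp : Fact p.Prime] {l : ℕ}

variable (p) in
noncomputable def invPowerSum (l s : ℕ) : ℤ_[p] :=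
  ∑ k ∈ reducedResidues (p ^ l), (k : ℤ_[p]).inv ^ s

theorem norm_natCast_of_mem_reducedResidues {k : ℕ} (hl : 1 ≤ l)
    (hk : k ∈ reducedResidues (p ^ l)) : ‖(k : ℤ_[p])‖ = 1 :=
  norm_natCast_eq_one_iff.2 <| Nat.Coprime.coprime_dvd_left (dvd_pow_self p (by omega))
    (mem_reducedResidues.1 hk).2

theorem H_eq_sum_reducedResidues (hl : 1 ≤ l) (s : ℕ) :
    H p l s = ∑ k ∈ reducedResidues (p ^ l), 1 / (k : ℚ) ^ s := by
  rw [H, ← sum_filter]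
  congr 1
  ext k
  simp only [mem_filter, mem_Ico, mem_reducedResidues, Nat.coprime_pow_left_iff hl,
    Nat.coprime_comm]
  refine and_congr_left fun hk => ⟨And.right, fun hlt => ⟨Nat.pos_of_ne_zero ?_, hlt⟩⟩
  rintro rfl
  exact hp.out.one_lt.ne' (Nat.coprime_zero_right _ |>.1 hk)

theorem coe_invPowerSum (hl : 1 ≤ l) (s : ℕ) :
    (invPowerSum p l s : ℚ_[p]) = H p l s := by
  change Coe.ringHom _ = _
  rw [H_eq_sum_reducedResidues hl, invPowerSum, map_sum, Rat.cast_sum]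
  refine sum_congr rfl fun k hk => ?_
  change ((k : ℤ_[p]).inv : ℚ_[p]) ^ s = _
  rw [coe_inv (norm_natCast_of_mem_reducedResidues hl hk)]
  push_cast
  rw [one_div, inv_pow]

theorem pow_dvd_invPowerSum_sub_coprimePowerSum (hl : 1 ≤ l) (s : ℕ) :
    (p : ℤ_[p]) ^ l ∣ invPowerSum p l s - coprimePowerSum (p ^ l) s := by
  have : NeZero (p ^ l) := ⟨pow_ne_zero l hp.out.ne_zero⟩
  rw [pow_dvd_iff_toZModPow_eq_zero, map_sub, sub_eq_zero, invPowerSum, coprimePowerSum, map_sum,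
    Int.cast_sum, map_sum]
  simp only [Int.cast_pow, Int.cast_natCast, map_pow, map_natCast]
  rw [sum_congr rfl fun k hk => by
    rw [toZModPow_inv (norm_natCast_of_mem_reducedResidues hl hk), map_natCast]]
  rw [sum_reducedResidues_eq_sum_units (p ^ l) (·⁻¹ ^ s),
    sum_reducedResidues_eq_sum_units (p ^ l) (· ^ s)]
  simp only [ZMod.inv_coe_unit]
  exact Fintype.sum_equiv (Equiv.inv _) _ _ fun _ => rfl

theorem pow_pred_dvd_invPowerSum (hl : 1 ≤ l) (s : ℕ) :
    (p : ℤ_[p]) ^ (l - 1) ∣ invPowerSum p l s := by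
  have hA : (p : ℤ_[p]) ^ (l - 1) ∣ coprimePowerSum (p ^ l) s := by
    exact_mod_cast Int.cast_dvd_cast _ _ (pow_pred_dvd_coprimePowerSum p s l)
  have hdiff := (pow_dvd_pow (p : ℤ_[p]) (Nat.sub_le l 1)).trans
    (pow_dvd_invPowerSum_sub_coprimePowerSum hl s)
  simpa using dvd_add hdiff hA

theorem pow_dvd_invPowerSum (hl : 1 ≤ l) {s : ℕ} (hs : ¬ (p - 1) ∣ s) :
    (p : ℤ_[p]) ^ l ∣ invPowerSum p l s := by
  have hA : (p : ℤ_[p]) ^ l ∣ coprimePowerSum (p ^ l) s := by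
    exact_mod_cast Int.cast_dvd_cast _ _ (pow_dvd_coprimePowerSum hs l)
  simpa using dvd_add (pow_dvd_invPowerSum_sub_coprimePowerSum hl s) hA

theorem sq_dvd_two_mul_invPowerSum_add (hl : 1 ≤ l) {s : ℕ} (hs : Odd s) :
    ((p : ℤ_[p]) ^ l) ^ 2 ∣ 2 * invPowerSum p l s + s * p ^ l * invPowerSum p l (s + 1) := by
  have hn : 1 < p ^ l := Nat.one_lt_pow (by omega) hp.out.one_lt
  have hrefl := sum_reducedResidues_reflect hn fun k => (k : ℤ_[p]).inv ^ s
  have hpaired : 2 * invPowerSum p l s + s * p ^ l * invPowerSum p l (s + 1) =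
      ∑ k ∈ reducedResidues (p ^ l), ((k : ℤ_[p]).inv ^ s +
        ((p ^ l - k : ℕ) : ℤ_[p]).inv ^ s + s * p ^ l * (k : ℤ_[p]).inv ^ (s + 1)) := by
    rw [sum_add_distrib, sum_add_distrib, hrefl, ← mul_sum, invPowerSum, invPowerSum]
    ring
  rw [hpaired]
  refine dvd_sum fun k hk => sq_dvd_inv_pow_add_inv_pow ?_
    (inv_mul (norm_natCast_of_mem_reducedResidues hl hk))
    (inv_mul (norm_natCast_of_mem_reducedResidues hl (sub_mem_reducedResidues hn hk))) hs
  rw [Nat.cast_sub (mem_reducedResidues.1 hk).1.le]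
  push_cast
  ring

theorem isUnit_two (hp2 : p ≠ 2) : IsUnit (2 : ℤ_[p]) := by
  rw [PadicInt.isUnit_iff, ← Nat.cast_two, norm_natCast_eq_one_iff]
  exact (Nat.coprime_primes hp.out Nat.prime_two).2 hp2

theorem pow_dvd_invPowerSum_of_odd (hp2 : p ≠ 2) (hl : 1 ≤ l) {s N : ℕ} (hs : Odd s)
    (hN : N ≤ 2 * l) (h : (p : ℤ_[p]) ^ N ∣ s * p ^ l * invPowerSum p l (s + 1)) :
    (p : ℤ_[p]) ^ N ∣ invPowerSum p l s := by
  have hsum := (pow_dvd_pow (p : ℤ_[p]) hN).trans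
    (pow_mul' (p : ℤ_[p]) 2 l ▸ sq_dvd_two_mul_invPowerSum_add hl hs)
  rw [← (isUnit_two hp2).dvd_mul_left]
  simpa using dvd_sub hsum h

theorem ratCong_of_pow_dvd {x : ℚ} {z : ℤ_[p]} (hz : (z : ℚ_[p]) = x) {m : ℕ}
    (h : (p : ℤ_[p]) ^ m ∣ z) : ratCong (p ^ m) x 0 := by
  rw [ratCong, sub_zero]
  have hden : p.Coprime x.den :=
    norm_natCast_eq_one_iff.1 (PadicInt.isUnit_iff.1 (isUnit_den x (hz ▸ z.2)))
  have hnum : (x.num : ℤ_[p]) = z * x.den := Subtype.ext <| by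
    push_cast
    rw [hz]
    exact_mod_cast (Rat.mul_den_eq_num x).symm
  refine ⟨hden.symm.pow_right m, ?_⟩
  exact_mod_cast (pow_p_dvd_int_iff m x.num).1 (hnum ▸ h.mul_right _)

end Padic

theorem harmonic_power_sum_congr_general (p l s : ℕ) (hp : p.Prime) (hp2 : p ≠ 2) (hl : 1 ≤ l) :
    (Odd s → (p - 1) ∣ (s + 1) → ¬ p ∣ s → ratCong (p ^ (2 * l - 1)) (H p l s) 0) ∧
    (Odd s → (¬ (p - 1) ∣ (s + 1) ∨ p ∣ s) → ratCong (p ^ (2 * l)) (H p l s) 0) ∧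
    (Even s → (p - 1) ∣ s → ratCong (p ^ (l - 1)) (H p l s) 0) ∧
    (Even s → ¬ (p - 1) ∣ s → ratCong (p ^ l) (H p l s) 0) := by
  have : Fact p.Prime := ⟨hp⟩
  have hH {N t : ℕ} (h : (p : ℤ_[p]) ^ N ∣ invPowerSum p l t) :
      ratCong (p ^ N) (H p l t) 0 :=
    ratCong_of_pow_dvd (coe_invPowerSum hl t) h
  refine ⟨fun hs _ _ => hH ?_, fun hs hcase => hH ?_,
    fun _ _ => hH (pow_pred_dvd_invPowerSum hl s), fun _ hs => hH (pow_dvd_invPowerSum hl hs)⟩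
  · refine pow_dvd_invPowerSum_of_odd hp2 hl hs (by omega) ?_
    rw [show 2 * l - 1 = l + (l - 1) by omega, pow_add]
    exact mul_dvd_mul (dvd_mul_left _ _) (pow_pred_dvd_invPowerSum hl _)
  · refine pow_dvd_invPowerSum_of_odd hp2 hl hs le_rfl ?_
    rcases hcase with hs1 | ⟨c, rfl⟩
    · rw [two_mul, pow_add]
      exact mul_dvd_mul (dvd_mul_left _ _) (pow_dvd_invPowerSum hl hs1)
    · rw [show 2 * l = (1 + l) + (l - 1) by omega, pow_add, pow_add, pow_one]
      exact mul_dvd_mul (mul_dvd_mul ⟨c, by push_cast; ring⟩ dvd_rfl)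
        (pow_pred_dvd_invPowerSum hl _)

theorem harmonic_power_sum_congr (p l s : ℕ) (hp : p.Prime) (hp2 : p ≠ 2) (hl : 1 ≤ l)
    (hs : 1 ≤ s) :
    (Odd s → (p - 1) ∣ (s + 1) → ¬ p ∣ s → ratCong (p ^ (2 * l - 1)) (H p l s) 0) ∧
    (Odd s → (¬ (p - 1) ∣ (s + 1) ∨ p ∣ s) → ratCong (p ^ (2 * l)) (H p l s) 0) ∧
    (Even s → (p - 1) ∣ s → ratCong (p ^ (l - 1)) (H p l s) 0) ∧
    (Even s → ¬ (p - 1) ∣ s → ratCong (p ^ l) (H p l s) 0) :=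
  harmonic_power_sum_congr_general p l s hp hp2 hl
end

section
/- Let p and q be distinct odd primes. Then ∑_{i+j+k=pq, i,j,k ∈ P_p} 1/(ijk) + (2/q³)·∑_{a+b+c=p, a,b,c ∈ P_p} 1/(abc) ≡ -2(q + 2/q³)·B_{p-3} (mod p), where both sums are over ordered triples of positive integers coprime to p with the indicated sum, as a congruence of rational numbers whose denominators are coprime to p. -/
/-!
Modulo `p`, `Zp n p` becomes the convolution `T n = ∑_{i+j+k=n} 1/(ijk)` over `𝔽_p`. The pair
sums `S s = ∑_{i+j=s} 1/(ij)` grow by `∑_{x ∈ 𝔽_p} 1/(x(s-x)) = -2/s²` when `s` grows by `p`.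
Splitting off the terms `k < p` of `T (p * m + p)` therefore leaves `T (p * m)` plus `T p`
corrected by `-2m ∑_{x ∈ 𝔽_p} 1/x³ = 0`, so `T (p * m) = m * T p`. For `0 < s < p` the partial
fractions `1/(i(s-i)) = (1/s)(1/i + 1/(s-i))` give `S s = (2/s) H_s`, hence
`T p = -2 ∑_k k⁻² H_{p-k}`. By Fermat `H_w = ∑_{i<w} i^(p-2)`, which Faulhaber's formula writes
as a polynomial in `w` with coefficients `B_i`; summed against `k⁻²`, every power sum over `𝔽_p`
vanishes except the one that picks out `B_{p-3}`. So `Zp (p * m) p ≡ -2m B_{p-3}`, and the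
theorem is the case `m = q` plus `2/q³` times the case `m = 1`.
-/

open Finset

local notation "ℤ₍" p "₎" => Valuation.integer (Rat.padicValuation p)

section PadicInteger

variable {p : ℕ} [Fact p.Prime]

theorem mem_padicInteger_iff {x : ℚ} : x ∈ ℤ₍p₎ ↔ ¬ p ∣ x.den :=
  Rat.padicValuation_le_one_iff

theorem natCast_den_ne_zero (x : ℤ₍p₎) : ((x : ℚ).den : ZMod p) ≠ 0 :=
  mt (ZMod.natCast_eq_zero_iff _ p).1 (mem_padicInteger_iff.1 x.2)

variable (p) in
def padicResidue : ℤ₍p₎ →+* ZMod p where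
  toFun x := ((x : ℚ) : ZMod p)
  map_one' := Rat.cast_one
  map_mul' x y := Rat.cast_mul_of_ne_zero (natCast_den_ne_zero x) (natCast_den_ne_zero y)
  map_zero' := Rat.cast_zero
  map_add' x y := Rat.cast_add_of_ne_zero (natCast_den_ne_zero x) (natCast_den_ne_zero y)

theorem padicResidue_apply (x : ℤ₍p₎) : padicResidue p x = ((x : ℚ) : ZMod p) := rfl

theorem ratCong_of_padicResidue_eq {x y : ℤ₍p₎} (h : padicResidue p x = padicResidue p y) :
    ratCong p x y := by
  refine ⟨Nat.Coprime.symm ((Fact.out : p.Prime).coprime_iff_not_dvd.2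
    (mem_padicInteger_iff.1 (x - y).2)), ?_⟩
  rw [← sub_eq_zero, ← map_sub, padicResidue_apply, Rat.cast_def, div_eq_zero_iff] at h
  exact (ZMod.intCast_zmod_eq_zero_iff_dvd _ p).1 (h.resolve_right (natCast_den_ne_zero (x - y)))

theorem inv_natCast_mem_padicInteger {n : ℕ} (hn : ¬ p ∣ n) : (n : ℚ)⁻¹ ∈ ℤ₍p₎ := by
  have hn0 : 0 < n := Nat.pos_of_ne_zero (by rintro rfl; exact hn (dvd_zero p))
  rwa [mem_padicInteger_iff, Rat.inv_natCast_den_of_pos hn0]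

variable (p) in
noncomputable def invNat (n : ℕ) : ℤ₍p₎ :=
  if h : p ∣ n then 0 else ⟨(n : ℚ)⁻¹, inv_natCast_mem_padicInteger h⟩

theorem coe_invNat {n : ℕ} (hn : ¬ p ∣ n) : (invNat p n : ℚ) = (n : ℚ)⁻¹ := by
  simp [invNat, hn]

theorem padicResidue_invNat (n : ℕ) : padicResidue p (invNat p n) = (n : ZMod p)⁻¹ := by
  by_cases hn : p ∣ n
  · simp [invNat, hn, (ZMod.natCast_eq_zero_iff n p).2 hn]
  · simp [invNat, hn, padicResidue_apply]

theorem bernoulli'_mem_padicInteger {n : ℕ} (hn : n < p - 1) : bernoulli' n ∈ ℤ₍p₎ := by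
  induction n using Nat.strong_induction_on with
  | _ n ih =>
    rw [bernoulli'_def]
    refine sub_mem (one_mem _) (sum_mem fun k hk => ?_)
    have hk : k < n := mem_range.1 hk
    have hden : ((n : ℚ) - k + 1) = ((n - k + 1 : ℕ) : ℚ) := by
      push_cast [Nat.cast_sub hk.le]
      ring
    rw [hden, div_eq_mul_inv]
    refine mul_mem (mul_mem (natCast_mem _ _) (inv_natCast_mem_padicInteger ?_))
      (ih k hk (by omega))
    exact Nat.not_dvd_of_pos_of_lt (by omega) (by omega)

theorem bernoulli_mem_padicInteger {n : ℕ} (hn : n < p - 1) : bernoulli n ∈ ℤ₍p₎ :=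
  mul_mem (pow_mem (neg_mem (one_mem _)) n) (bernoulli'_mem_padicInteger hn)

end PadicInteger

theorem sum_Icc_one_eq_sum_range {M : Type*} [AddCommMonoid M] {g : ℕ → M} (hg : g 0 = 0)
    (n : ℕ) : ∑ i ∈ Icc 1 n, g i = ∑ i ∈ range (n + 1), g i := by
  rw [range_eq_Ico, sum_eq_sum_Ico_succ_bot (Nat.succ_pos n), hg, zero_add]
  rfl

theorem sum_Icc_triple_eq_sum_range {R : Type*} [CommSemiring R] {f : ℕ → R} (hf : f 0 = 0)
    (n : ℕ) :
    ∑ i ∈ Icc 1 n, ∑ j ∈ Icc 1 n, ∑ k ∈ Icc 1 n, (if i + j + k = n then f i * f j * f k else 0) =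
      ∑ i ∈ range (n + 1), f i * ∑ j ∈ range (n - i + 1), f j * f (n - i - j) := by
  refine (sum_Icc_one_eq_sum_range (by simp [hf]) n).trans (sum_congr rfl fun i hi => ?_)
  have hi : i ≤ n := mem_range_succ_iff.1 hi
  have hk (j : ℕ) : ∑ k ∈ Icc 1 n, (if i + j + k = n then f i * f j * f k else 0) =
      if j ≤ n - i then f i * (f j * f (n - i - j)) else 0 := by
    rw [sum_Icc_one_eq_sum_range (by simp [hf])]
    split_ifs with hj
    · rw [sum_eq_single_of_mem (n - i - j) (mem_range_succ_iff.2 (by omega))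
        fun k _ hk => if_neg (by omega), if_pos (by omega), mul_assoc]
    · exact sum_eq_zero fun k _ => if_neg (by omega)
  rw [sum_congr rfl fun j _ => hk j, sum_Icc_one_eq_sum_range (by simp [hf]), ← sum_filter,
    mul_sum]
  congr 1
  ext j
  simp only [mem_filter, mem_range]
  omega

theorem inv_mul_inv_sub {K : Type*} [Field K] [DecidableEq K] {r : K} (hr : r ≠ 0) (x : K) :
    x⁻¹ * (r - x)⁻¹ =
      r⁻¹ * (x⁻¹ + (r - x)⁻¹) - (if x = 0 then r⁻¹ ^ 2 else 0) -
        (if x = r then r⁻¹ ^ 2 else 0) := by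
  by_cases hx : x = 0
  · simp [hx, sq, Ne.symm hr]
  by_cases hxr : x = r
  · simp [hxr, sq]
  have hrx : r - x ≠ 0 := sub_ne_zero.2 (Ne.symm hxr)
  rw [if_neg hx, if_neg hxr]
  field_simp
  ring

namespace ZMod

theorem sum_range_natCast {n : ℕ} [NeZero n] {M : Type*} [AddCommMonoid M] (g : ZMod n → M) :
    ∑ i ∈ range n, g i = ∑ x, g x :=
  sum_nbij' (fun i => (i : ZMod n)) ZMod.val (fun _ _ => mem_univ _)
    (fun x _ => mem_range.2 x.val_lt) (fun _ hi => ZMod.val_cast_of_lt (mem_range.1 hi))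
    (fun x _ => ZMod.natCast_zmod_val x) (fun _ _ => rfl)

theorem sum_range_natCast_add {n : ℕ} [NeZero n] {M : Type*} [AddCommMonoid M] (g : ZMod n → M)
    (a : ZMod n) : ∑ i ∈ range n, g (a + i) = ∑ x, g x :=
  (sum_range_natCast fun x => g (a + x)).trans (Equiv.sum_comp (Equiv.addLeft a) g)

variable {p : ℕ} [Fact p.Prime]

theorem sum_eq_zero_of_odd (hp2 : p ≠ 2) {f : ZMod p → ZMod p} (hf : ∀ x, f (-x) = -f x) :
    ∑ x, f x = 0 := by
  have h : -∑ x, f x = ∑ x, f x := by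
    rw [← sum_neg_distrib]
    exact Fintype.sum_equiv (Equiv.neg _) _ _ fun x => by simp [hf]
  refine ((ZMod.neg_eq_self_iff _).1 h).resolve_right fun h2 => ?_
  have := (Fact.out : p.Prime).eq_one_or_self_of_dvd 2 ⟨_, h2.symm⟩
  omega

theorem inv_eq_pow_sub_two (hp2 : p ≠ 2) (x : ZMod p) : x⁻¹ = x ^ (p - 2) := by
  have hp := (Fact.out : p.Prime).two_le
  rcases eq_or_ne x 0 with rfl | hx
  · rw [inv_zero, zero_pow (by omega)]
  · refine inv_eq_of_mul_eq_one_right ?_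
    rw [← pow_succ', show p - 2 + 1 = p - 1 by omega, ZMod.pow_card_sub_one_eq_one hx]

theorem sum_pow_of_ne_zero {e : ℕ} (he : e ≠ 0) :
    ∑ x : ZMod p, x ^ e = if p - 1 ∣ e then -1 else 0 := by
  classical
  have h := FiniteField.sum_pow_units (ZMod p) e
  rw [ZMod.card] at h
  rw [← h, ← Fintype.sum_subtype_add_sum_subtype (· ≠ 0), ← unitsEquivNeZero.sum_comp,
    Fintype.sum_eq_zero (fun x : {x : ZMod p // ¬x ≠ 0} => (x : ZMod p) ^ e)
      fun x => by rw [not_not.1 x.2, zero_pow he], add_zero]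
  rfl

theorem natCast_choose_sub_one {k : ℕ} (hk : k < p) :
    (((p - 1).choose k : ℕ) : ZMod p) = (-1) ^ k := by
  induction k with
  | zero => simp
  | succ k ih =>
    have hpk : p.choose (k + 1) = (p - 1).choose k + (p - 1).choose (k + 1) := by
      conv_lhs => rw [show p = p - 1 + 1 by omega]
      exact Nat.choose_succ_succ' _ _
    have h0 : ((p.choose (k + 1) : ℕ) : ZMod p) = 0 :=
      (ZMod.natCast_eq_zero_iff _ p).2 ((Fact.out : p.Prime).dvd_choose_self k.succ_ne_zero hk)
    rw [hpk, Nat.cast_add, ih (by omega)] at h0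
    rw [pow_succ]
    linear_combination h0

theorem natCast_eq_natCast_iff_of_lt {i j : ℕ} (hi : i < p) (hj : j < p) :
    (i : ZMod p) = j ↔ i = j :=
  ⟨fun h => by simpa [ZMod.val_cast_of_lt hi, ZMod.val_cast_of_lt hj] using congrArg ZMod.val h,
    fun h => h ▸ rfl⟩

theorem natCast_ne_zero_of_lt {k : ℕ} (hk0 : 0 < k) (hk : k < p) : (k : ZMod p) ≠ 0 :=
  (ZMod.natCast_eq_zero_iff k p).not.2 (Nat.not_dvd_of_pos_of_lt hk0 hk)

theorem natCast_self_sub {k : ℕ} (hk : k ≤ p) : ((p - k : ℕ) : ZMod p) = -k := by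
  rw [Nat.cast_sub hk, ZMod.natCast_self, zero_sub]

end ZMod

section InverseSums

variable {p : ℕ} [Fact p.Prime]

/- Terms with `p ∣ i` need no exclusion: `(i : ZMod p)⁻¹ = 0` for them. -/

variable (p) in
def harmonicZMod (w : ℕ) : ZMod p := ∑ i ∈ range w, (i : ZMod p)⁻¹

variable (p) in
def pairInvSum (s : ℕ) : ZMod p := ∑ i ∈ range (s + 1), (i : ZMod p)⁻¹ * ((s : ZMod p) - i)⁻¹

variable (p) in
def tripleInvSum (n : ℕ) : ZMod p := ∑ k ∈ range (n + 1), (k : ZMod p)⁻¹ * pairInvSum p (n - k)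

theorem sum_inv_mul_inv_sub (hp2 : p ≠ 2) {r : ZMod p} (hr : r ≠ 0) :
    ∑ x, x⁻¹ * (r - x)⁻¹ = -2 * r⁻¹ ^ 2 := by
  classical
  have hinv : ∑ x : ZMod p, x⁻¹ = 0 := ZMod.sum_eq_zero_of_odd hp2 fun x => inv_neg
  have hinv' : ∑ x : ZMod p, (r - x)⁻¹ = 0 :=
    hinv ▸ Fintype.sum_equiv (Equiv.subLeft r) _ _ fun x => rfl
  simp only [inv_mul_inv_sub hr, sum_sub_distrib, ← mul_sum, sum_add_distrib, hinv, hinv',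
    sum_ite_eq', mem_univ, if_true]
  ring

theorem pairInvSum_add_prime (s : ℕ) :
    pairInvSum p (s + p) = pairInvSum p s + ∑ x, x⁻¹ * ((s : ZMod p) - x)⁻¹ := by
  have hs : ((s + p : ℕ) : ZMod p) = s := by simp
  rw [pairInvSum, hs, show s + p + 1 = (s + 1) + p by omega, sum_range_add, pairInvSum]
  congr 1
  simp only [Nat.cast_add, Nat.cast_one]
  exact ZMod.sum_range_natCast_add (fun x : ZMod p => x⁻¹ * ((s : ZMod p) - x)⁻¹) _

theorem pairInvSum_add_prime_mul (hp2 : p ≠ 2) {s : ℕ} (hs : (s : ZMod p) ≠ 0) (d : ℕ) :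
    pairInvSum p (s + p * d) = pairInvSum p s - 2 * d * (s : ZMod p)⁻¹ ^ 2 := by
  induction d with
  | zero => simp
  | succ d ih =>
    have hcast : ((s + p * d : ℕ) : ZMod p) = s := by simp
    rw [show s + p * (d + 1) = s + p * d + p by ring, pairInvSum_add_prime, ih, hcast,
      sum_inv_mul_inv_sub hp2 hs]
    push_cast
    ring

theorem pairInvSum_of_lt {r : ℕ} (hr : r < p) :
    pairInvSum p r = 2 * (r : ZMod p)⁻¹ * harmonicZMod p r := by
  classical
  rcases Nat.eq_zero_or_pos r with rfl | hr0
  · simp [pairInvSum, harmonicZMod]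
  have hr' : (r : ZMod p) ≠ 0 := ZMod.natCast_ne_zero_of_lt hr0 hr
  have hsum : ∑ i ∈ range (r + 1), (i : ZMod p)⁻¹ = harmonicZMod p r + (r : ZMod p)⁻¹ :=
    sum_range_succ _ r
  have hrefl : ∑ i ∈ range (r + 1), ((r : ZMod p) - i)⁻¹ = harmonicZMod p r + (r : ZMod p)⁻¹ := by
    rw [← hsum, ← sum_range_reflect]
    refine sum_congr rfl fun i hi => ?_
    rw [Nat.add_sub_cancel, Nat.cast_sub (mem_range_succ_iff.1 hi), sub_sub_cancel]
  have hite (j : ℕ) (hj : j ≤ r) (c : ZMod p) :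
      ∑ i ∈ range (r + 1), (if (i : ZMod p) = j then c else 0) = c := by
    rw [sum_eq_single_of_mem j (mem_range_succ_iff.2 hj) fun i hi hij => if_neg ?_, if_pos rfl]
    rwa [ZMod.natCast_eq_natCast_iff_of_lt (by simp at hi; omega) (by omega)]
  have hite0 := hite 0 (Nat.zero_le r) ((r : ZMod p)⁻¹ ^ 2)
  rw [Nat.cast_zero] at hite0
  rw [pairInvSum]
  simp only [inv_mul_inv_sub hr', sum_sub_distrib, ← mul_sum, sum_add_distrib, hsum, hrefl, hite0,
    hite r le_rfl]
  ring

theorem tripleInvSum_prime_mul_add_prime (hp2 : p ≠ 2) (m : ℕ) :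
    tripleInvSum p (p * m + p) = tripleInvSum p (p * m) + tripleInvSum p p := by
  have hhead : tripleInvSum p p = ∑ k ∈ range p, (k : ZMod p)⁻¹ * pairInvSum p (p - k) := by
    rw [tripleInvSum, sum_range_succ, ZMod.natCast_self, inv_zero, zero_mul, add_zero]
  have hterm (k : ℕ) (hk : k < p) : (k : ZMod p)⁻¹ * pairInvSum p (p * m + p - k) =
      (k : ZMod p)⁻¹ * pairInvSum p (p - k) - 2 * m * (k : ZMod p)⁻¹ ^ 3 := by
    rcases Nat.eq_zero_or_pos k with rfl | hk0
    · simp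
    have hne : ((p - k : ℕ) : ZMod p) ≠ 0 := by
      rw [ZMod.natCast_self_sub hk.le, neg_ne_zero]
      exact ZMod.natCast_ne_zero_of_lt hk0 hk
    rw [show p * m + p - k = (p - k) + p * m by omega, pairInvSum_add_prime_mul hp2 hne,
      ZMod.natCast_self_sub hk.le, inv_neg, neg_sq]
    ring
  have hcube : ∑ k ∈ range p, (k : ZMod p)⁻¹ ^ 3 = 0 := by
    rw [ZMod.sum_range_natCast (fun x : ZMod p => x⁻¹ ^ 3)]
    exact ZMod.sum_eq_zero_of_odd hp2 fun x => by rw [inv_neg, Odd.neg_pow (by decide)]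
  have htail (k : ℕ) : ((p + k : ℕ) : ZMod p)⁻¹ * pairInvSum p (p * m + p - (p + k)) =
      (k : ZMod p)⁻¹ * pairInvSum p (p * m - k) := by
    rw [show p * m + p - (p + k) = p * m - k by omega]
    simp
  rw [tripleInvSum, show p * m + p + 1 = p + (p * m + 1) by ring, sum_range_add,
    sum_congr rfl fun k hk => hterm k (mem_range.1 hk), sum_congr rfl fun k _ => htail k,
    sum_sub_distrib, ← mul_sum, hcube, hhead, mul_zero, sub_zero, add_comm]
  rfl

theorem tripleInvSum_prime_mul (hp2 : p ≠ 2) (m : ℕ) :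
    tripleInvSum p (p * m) = m * tripleInvSum p p := by
  induction m with
  | zero => simp [tripleInvSum, pairInvSum]
  | succ m ih =>
    rw [Nat.mul_succ, tripleInvSum_prime_mul_add_prime hp2, ih]
    push_cast
    ring

theorem tripleInvSum_prime :
    tripleInvSum p p = -2 * ∑ k ∈ range p, (k : ZMod p)⁻¹ ^ 2 * harmonicZMod p (p - k) := by
  rw [tripleInvSum, sum_range_succ, ZMod.natCast_self, inv_zero, zero_mul, add_zero, mul_sum]
  refine sum_congr rfl fun k hk => ?_
  rcases Nat.eq_zero_or_pos k with rfl | hk0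
  · simp
  rw [pairInvSum_of_lt (by simp at hk; omega), ZMod.natCast_self_sub (mem_range.1 hk).le, inv_neg]
  ring

theorem harmonicZMod_eq (hp2 : p ≠ 2) (w : ℕ) :
    harmonicZMod p w = -∑ i ∈ range (p - 1),
      ((bernoulli i : ℚ) : ZMod p) * ((p - 1).choose i : ℕ) * (w : ZMod p) ^ (p - 1 - i) := by
  have hp := (Fact.out : p.Prime).two_le
  have hp1 : ¬ p ∣ p - 1 := Nat.not_dvd_of_pos_of_lt (by omega) (by omega)
  have hfaulhaber : ∑ k ∈ range w, (k : ℤ₍p₎) ^ (p - 2) =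
      ∑ i : Fin (p - 1), ⟨bernoulli i, bernoulli_mem_padicInteger i.2⟩ * ((p - 1).choose i : ℕ) *
        (w : ℤ₍p₎) ^ (p - 1 - i) * invNat p (p - 1) := by
    apply Subtype.ext
    push_cast [coe_invNat hp1]
    rw [Fin.sum_univ_eq_sum_range (fun i => bernoulli i * ((p - 1).choose i : ℕ) *
      (w : ℚ) ^ (p - 1 - i) * ((p - 1 : ℕ) : ℚ)⁻¹), sum_range_pow, show p - 2 + 1 = p - 1 by omega,
      show ((p - 2 : ℕ) : ℚ) + 1 = (p - 1 : ℕ) by norm_cast; omega]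
    simp only [div_eq_mul_inv]
  have hp1' : ((p - 1 : ℕ) : ZMod p) = -1 := by
    rw [ZMod.natCast_self_sub (by omega), Nat.cast_one]
  calc harmonicZMod p w = ∑ k ∈ range w, (k : ZMod p) ^ (p - 2) :=
        sum_congr rfl fun k _ => ZMod.inv_eq_pow_sub_two hp2 _
    _ = padicResidue p (∑ k ∈ range w, (k : ℤ₍p₎) ^ (p - 2)) := by simp
    _ = _ := by
      rw [hfaulhaber]
      simp only [map_sum, map_mul, map_pow, map_natCast, padicResidue_invNat, hp1', inv_neg,
        inv_one, mul_neg_one, sum_neg_distrib]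
      exact congrArg Neg.neg (Fin.sum_univ_eq_sum_range (fun i => ((bernoulli i : ℚ) : ZMod p) *
        ((p - 1).choose i : ℕ) * (w : ZMod p) ^ (p - 1 - i)) _)

theorem sum_inv_sq_mul_pow (hp2 : p ≠ 2) {i : ℕ} (hi : i < p - 1) :
    ∑ x : ZMod p, x⁻¹ ^ 2 * x ^ (p - 1 - i) = if i = p - 3 then -1 else 0 := by
  have hp : 3 ≤ p := (Fact.out : p.Prime).two_le.lt_of_ne' hp2
  have hdvd : p - 1 ∣ (p - 2) * 2 + (p - 1 - i) ↔ i = p - 3 := by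
    constructor
    · rintro ⟨c, hc⟩
      rcases c with _ | _ | _ | c <;> ring_nf at hc <;> omega
    · rintro rfl
      exact ⟨2, by omega⟩
  simp_rw [ZMod.inv_eq_pow_sub_two hp2, ← pow_mul, ← pow_add]
  rw [ZMod.sum_pow_of_ne_zero (by omega)]
  exact if_congr hdvd rfl rfl

theorem sum_inv_sq_mul_harmonicZMod (hp2 : p ≠ 2) :
    ∑ k ∈ range p, (k : ZMod p)⁻¹ ^ 2 * harmonicZMod p (p - k) =
      ((bernoulli (p - 3) : ℚ) : ZMod p) := by
  have hp : 3 ≤ p := (Fact.out : p.Prime).two_le.lt_of_ne' hp2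
  set F : ZMod p → ZMod p := fun x => -∑ i ∈ range (p - 1),
    ((bernoulli i : ℚ) : ZMod p) * ((p - 1).choose i : ℕ) * x ^ (p - 1 - i) with hF
  calc ∑ k ∈ range p, (k : ZMod p)⁻¹ ^ 2 * harmonicZMod p (p - k)
      = ∑ k ∈ range p, (k : ZMod p)⁻¹ ^ 2 * F (-k) := sum_congr rfl fun k hk => by
        rw [harmonicZMod_eq hp2, ZMod.natCast_self_sub (mem_range.1 hk).le]
    _ = ∑ x : ZMod p, x⁻¹ ^ 2 * F (-x) := ZMod.sum_range_natCast (fun x => x⁻¹ ^ 2 * F (-x))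
    _ = ∑ x : ZMod p, x⁻¹ ^ 2 * F x :=
        Fintype.sum_equiv (Equiv.neg _) _ _ fun x => by simp [inv_neg]
    _ = -∑ i ∈ range (p - 1), ((bernoulli i : ℚ) : ZMod p) * ((p - 1).choose i : ℕ) *
          ∑ x : ZMod p, x⁻¹ ^ 2 * x ^ (p - 1 - i) := by
        simp only [hF, mul_neg, sum_neg_distrib, mul_sum]
        rw [sum_comm]
        congr 1
        exact sum_congr rfl fun i _ => sum_congr rfl fun x _ => by ring
    _ = _ := by
        rw [sum_congr rfl fun i hi => by rw [sum_inv_sq_mul_pow hp2 (mem_range.1 hi), mul_ite,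
          mul_neg_one, mul_zero], sum_ite_eq', if_pos (mem_range.2 (by omega)),
          ZMod.natCast_choose_sub_one (by omega),
          (Nat.Odd.sub_odd ((Fact.out : p.Prime).odd_of_ne_two hp2) (by decide)).neg_one_pow,
          mul_one, neg_neg]

end InverseSums

section Reduction

variable {p : ℕ} [Fact p.Prime]

theorem Zp_eq_coe (n : ℕ) :
    Zp n p = ((∑ i ∈ Icc 1 n, ∑ j ∈ Icc 1 n, ∑ k ∈ Icc 1 n,
      if i + j + k = n then invNat p i * invNat p j * invNat p k else 0 : ℤ₍p₎) : ℚ) := by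
  have hcop (m : ℕ) : m.Coprime p ↔ ¬ p ∣ m :=
    Nat.coprime_comm.trans (Fact.out : p.Prime).coprime_iff_not_dvd
  push_cast
  refine sum_congr rfl fun i _ => sum_congr rfl fun j _ => sum_congr rfl fun k _ => ?_
  by_cases hn : i + j + k = n
  · by_cases hc : i.Coprime p ∧ j.Coprime p ∧ k.Coprime p
    · rw [if_pos ⟨hn, hc⟩, if_pos hn]
      push_cast [coe_invNat ((hcop _).1 hc.1), coe_invNat ((hcop _).1 hc.2.1),
        coe_invNat ((hcop _).1 hc.2.2)]
      ring
    · rw [if_neg fun h => hc h.2, if_pos hn]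
      simp only [not_and_or, hcop, not_not] at hc
      rcases hc with h | h | h <;> simp [invNat, h]
  · rw [if_neg fun h => hn h.1, if_neg hn]
    rfl

theorem Zp_mem_padicInteger (n : ℕ) : Zp n p ∈ ℤ₍p₎ := by
  rw [Zp_eq_coe]
  exact Subtype.prop _

theorem cast_Zp (n : ℕ) : ((Zp n p : ℚ) : ZMod p) = tripleInvSum p n := by
  rw [Zp_eq_coe, ← padicResidue_apply]
  simp only [map_sum, apply_ite (padicResidue p), map_mul, padicResidue_invNat, map_zero]
  rw [sum_Icc_triple_eq_sum_range (f := fun i => (i : ZMod p)⁻¹) (by simp)]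
  refine sum_congr rfl fun i _ => congrArg _ (sum_congr rfl fun j hj => ?_)
  rw [Nat.cast_sub (by simp at hj; omega)]

theorem cast_Zp_prime_mul (hp2 : p ≠ 2) (m : ℕ) :
    ((Zp (p * m) p : ℚ) : ZMod p) = -2 * m * ((bernoulli (p - 3) : ℚ) : ZMod p) := by
  rw [cast_Zp, tripleInvSum_prime_mul hp2, tripleInvSum_prime, sum_inv_sq_mul_harmonicZMod hp2]
  ring

end Reduction

theorem two_triple_sums_congr_general (p q : ℕ) (hp : p.Prime) (hq : q.Prime) (hp2 : p ≠ 2)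
    (hpq : p ≠ q) :
    ratCong p (Zp (p * q) p + (2 / (q : ℚ) ^ 3) * Zp p p)
      (-2 * ((q : ℚ) + 2 / (q : ℚ) ^ 3) * bernoulli (p - 3)) := by
  have := Fact.mk hp
  have hp3 : p - 3 < p - 1 := by have := hp.two_le; omega
  have hq3 : ¬ p ∣ q ^ 3 :=
    fun h => hpq ((Nat.prime_dvd_prime_iff_eq hp hq).1 (hp.dvd_of_dvd_pow h))
  have hZp : ((Zp p p : ℚ) : ZMod p) = -2 * ((bernoulli (p - 3) : ℚ) : ZMod p) := by
    simpa using cast_Zp_prime_mul hp2 1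
  have h2 : ((2 : ℤ₍p₎) : ℚ) = 2 := map_ofNat (ℤ₍p₎).subtype 2
  let c : ℤ₍p₎ := 2 * invNat p (q ^ 3)
  have hc : (c : ℚ) = 2 / (q : ℚ) ^ 3 := by simp [c, coe_invNat hq3, div_eq_mul_inv, h2]
  have key := ratCong_of_padicResidue_eq (p := p)
    (x := ⟨Zp (p * q) p, Zp_mem_padicInteger _⟩ + c * ⟨Zp p p, Zp_mem_padicInteger _⟩)
    (y := -2 * (q + c) * ⟨bernoulli (p - 3), bernoulli_mem_padicInteger hp3⟩) (by
      simp only [map_add, map_mul, map_neg, map_ofNat, map_natCast, padicResidue_apply,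
        cast_Zp_prime_mul hp2, hZp]
      ring)
  simpa [hc, h2] using key

theorem two_triple_sums_congr (p q : ℕ) (hp : p.Prime) (hq : q.Prime) (hp2 : p ≠ 2)
    (hq2 : q ≠ 2) (hpq : p ≠ q) :
    ratCong p (Zp (p * q) p + (2 / (q : ℚ) ^ 3) * Zp p p)
      (-2 * ((q : ℚ) + 2 / (q : ℚ) ^ 3) * bernoulli (p - 3)) :=
  two_triple_sums_congr_general p q hp hq hp2 hpq
end
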